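/- arXiv:2512.19034 — 4 statements merged into one kernel-verified Lean document; each statement's English description precedes it below -/
import Mathlib

section
/- Suppose E is a well-nested family of partial permutations (words with distinct integer letters), closed under the relation ≾ generated by uBCAv ≾ uCABv for A < B < C, with no element containing a consecutive decreasing subword of length 3. Fix integers a < b, and let F be the set of words obtained by deleting the adjacent pair b,a from each w ∈ E containing b immediately followed by a. Then F is also a well-nested family. -/
/-- One step of the word relation `≾`: replace a consecutive subword `B,C,A` by
`C,A,B`, where `A < B < C`. -/
def PrecStep (x y : List ℤ) : Prop :=
  ∃ u v : List ℤ, ∃ A B C : ℤ, A < B ∧ B < C ∧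
    x = u ++ [B, C, A] ++ v ∧ y = u ++ [C, A, B] ++ v

/-- A word has a consecutive 321-pattern if three consecutive letters strictly
decrease. -/
def Has321 (w : List ℤ) : Prop :=
  ∃ u v : List ℤ, ∃ a b c : ℤ, w = u ++ [a, b, c] ++ v ∧ b < a ∧ c < b

/-- A well-nested family: a set of partial permutations (words with distinct
letters) closed under `≾` (in both directions) none of whose elements has a
consecutive 321-pattern. -/
def WellNested (E : Set (List ℤ)) : Prop :=
  (∀ w ∈ E, w.Nodup) ∧ (∀ x y, PrecStep x y → (x ∈ E ↔ y ∈ E)) ∧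
    (∀ w ∈ E, ¬Has321 w)

/-- If `E` is a well-nested family and `a < b`, then the set `F`
of words obtained by deleting the adjacent pair `b, a` from each `w ∈ E`
containing `b` immediately followed by `a` is also a well-nested family. -/
theorem stmt10 (E : Set (List ℤ)) (hE : WellNested E) (a b : ℤ) (hab : a < b) :
    WellNested {x : List ℤ | ∃ u v : List ℤ, u ++ [b, a] ++ v ∈ E ∧ x = u ++ v} := by
  obtain ⟨hnd, hstep, h321⟩ := hE
  -- basic tools
  have estep : ∀ (s t : List ℤ) {A B C : ℤ}, A < B → B < C →
      (s ++ [B, C, A] ++ t ∈ E ↔ s ++ [C, A, B] ++ t ∈ E) :=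
    by intro s t A B C h1 h2; exact hstep _ _ ⟨s, t, A, B, C, h1, h2, rfl, rfl⟩
  have e321 : ∀ (s t : List ℤ) (x y z : ℤ), s ++ [x, y, z] ++ t ∈ E → y < x → z < y → False :=
    fun s t x y z hm h1 h2 => h321 _ hm ⟨s, t, x, y, z, rfl, h1, h2⟩
  have ndE : ∀ (s t m : List ℤ), s ++ m ++ t ∈ E → m.Nodup := by
    intro s t m hm
    have h := hnd _ hm
    rw [List.append_assoc] at h
    exact h.sublist ((List.sublist_append_left _ t).trans (List.sublist_append_right s _))
  have lt1 : ∀ (s t : List ℤ) (x y z : ℤ), s ++ [x, y, z] ++ t ∈ E → z < y → x ≠ y → x < y :=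
    fun s t x y z hm hzy hne => hne.lt_or_gt.resolve_right fun h => e321 s t x y z hm h hzy
  have lt2 : ∀ (s t : List ℤ) (x y z : ℤ), s ++ [x, y, z] ++ t ∈ E → y < x → y ≠ z → y < z :=
    fun s t x y z hm hyx hne => hne.lt_or_gt.resolve_right fun h => e321 s t x y z hm hyx h
  refine ⟨?_, ?_, ?_⟩
  · -- nodup
    rintro x ⟨u, v, hw, rfl⟩
    have h := hnd _ hw
    rw [List.append_assoc] at h
    exact h.sublist ((List.Sublist.refl u).append (List.sublist_append_right [b,a] v))
  · -- step closure
    rintro x y ⟨s, t, A, B, C, hAB, hBC, rfl, rfl⟩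
    constructor
    · rintro ⟨u, v, hw, huv⟩
      rw [List.append_assoc] at huv
      rcases List.append_eq_append_iff.mp huv.symm with ⟨a', rfl, rfl⟩ | ⟨c', rfl, h2⟩
      · -- pattern inside v
        have h' := (estep (u ++ [b,a] ++ a') t hAB hBC).mp
          (by simpa [List.append_assoc] using hw)
        exact ⟨u, a' ++ ([C,A,B] ++ t), by simpa [List.append_assoc] using h',
          by simp [List.append_assoc]⟩
      · rcases c' with _ | ⟨e1, _ | ⟨e2, _ | ⟨e3, r⟩⟩⟩
        · -- c' = []
          simp only [List.nil_append] at h2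
          subst h2
          have h' := (estep (s ++ [b,a]) t hAB hBC).mp
            (by simpa [List.append_assoc] using hw)
          exact ⟨s, [C,A,B] ++ t, by simpa [List.append_assoc] using h',
            by simp [List.append_assoc]⟩
        · -- c' = [B] : w = s ++ [B,b,a,C,A] ++ t
          simp only [List.cons_append, List.nil_append, List.cons.injEq] at h2
          obtain ⟨rfl, rfl⟩ := h2
          have h5 : s ++ [B, b, a, C, A] ++ t ∈ E := by
            simpa [List.append_assoc] using hw
          have hnd5 := ndE s t [B, b, a, C, A] h5
          simp at hnd5
          have neBb : B ≠ b := by tauto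
          have neaC : a ≠ C := by tauto
          have neaB : a ≠ B := by tauto
          have nebC : b ≠ C := by tauto
          have hBb : B < b := lt1 s ([C,A]++t) B b a (by simpa [List.append_assoc] using h5) hab neBb
          have haC : a < C := lt2 (s ++ [B]) ([A]++t) b a C (by simpa [List.append_assoc] using h5) hab neaC
          rcases neaB.lt_or_gt with haB | hBa
          · have h6 := (estep s (C :: A :: t) haB hBb).mp (by simpa [List.append_assoc] using h5)
            have h7 := (estep (s ++ [b,a]) t hAB hBC).mp (by simpa [List.append_assoc] using h6)
            exact ⟨s, [C,A,B] ++ t, by simpa [List.append_assoc] using h7,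
              by simp [List.append_assoc]⟩
          · -- B < a < C
            have h6 := (estep (s ++ [B,b]) t (hAB.trans hBa) haC).mp
              (by simpa [List.append_assoc] using h5)
            -- h6 : s ++ [B,b,C,A,a] ++ t ∈ E
            rcases nebC.lt_or_gt with hbC | hCb
            · have h7 := (estep (s ++ [B]) (a :: t) (hAB.trans (hBa.trans hab)) hbC).mp
                (by simpa [List.append_assoc] using h6)
              -- h7 : s ++ [B,C,A,b,a] ++ t ∈ E
              have h8 := (estep s ([b,a] ++ t) hAB hBC).mp (by simpa [List.append_assoc] using h7)
              exact ⟨s ++ [C,A,B], t, by simpa [List.append_assoc] using h8,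
                by simp [List.append_assoc]⟩
            · exact (e321 (s ++ [B]) (a :: t) b C A
                (by simpa [List.append_assoc] using h6) hCb (hAB.trans hBC)).elim
        · -- c' = [B,C] : w = s ++ [B,C,b,a,A] ++ t
          simp only [List.cons_append, List.nil_append, List.cons.injEq] at h2
          obtain ⟨rfl, rfl, rfl⟩ := h2
          have h5 : s ++ [B, C, b, a, A] ++ t ∈ E := by
            simpa [List.append_assoc] using hw
          have hnd5 := ndE s t [B, C, b, a, A] h5
          simp at hnd5
          have neCb : C ≠ b := by tauto
          have neaA : a ≠ A := by tauto
          have hCb : C < b := lt1 (s ++ [B]) ([A]++t) C b a (by simpa [List.append_assoc] using h5) hab neCb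
          have haA : a < A := lt2 (s ++ [B,C]) t b a A (by simpa [List.append_assoc] using h5) hab neaA
          have h6 := (estep (s ++ [B]) (A :: t) (haA.trans (hAB.trans hBC)) hCb).mp
            (by simpa [List.append_assoc] using h5)
          -- h6 : s ++ [B,b,a,C,A] ++ t ∈ E
          have h7 := (estep s (C :: A :: t) (haA.trans hAB) (hBC.trans hCb)).mp
            (by simpa [List.append_assoc] using h6)
          -- h7 : s ++ [b,a,B,C,A] ++ t ∈ E
          have h8 := (estep (s ++ [b,a]) t hAB hBC).mp (by simpa [List.append_assoc] using h7)
          exact ⟨s, [C,A,B] ++ t, by simpa [List.append_assoc] using h8,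
            by simp [List.append_assoc]⟩
        · -- c' = B :: C :: A :: r
          simp only [List.cons_append, List.nil_append, List.cons.injEq] at h2
          obtain ⟨rfl, rfl, rfl, rfl⟩ := h2
          have h' := (estep s (r ++ [b,a] ++ v) hAB hBC).mp
            (by simpa [List.append_assoc] using hw)
          exact ⟨s ++ [C,A,B] ++ r, v, by simpa [List.append_assoc] using h',
            by simp [List.append_assoc]⟩
    · rintro ⟨u, v, hw, huv⟩
      rw [List.append_assoc] at huv
      rcases List.append_eq_append_iff.mp huv.symm with ⟨a', rfl, rfl⟩ | ⟨c', rfl, h2⟩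
      · have h' := (estep (u ++ [b,a] ++ a') t hAB hBC).mpr
          (by simpa [List.append_assoc] using hw)
        exact ⟨u, a' ++ ([B,C,A] ++ t), by simpa [List.append_assoc] using h',
          by simp [List.append_assoc]⟩
      · rcases c' with _ | ⟨e1, _ | ⟨e2, _ | ⟨e3, r⟩⟩⟩
        · simp only [List.nil_append] at h2
          subst h2
          have h' := (estep (s ++ [b,a]) t hAB hBC).mpr
            (by simpa [List.append_assoc] using hw)
          exact ⟨s, [B,C,A] ++ t, by simpa [List.append_assoc] using h',
            by simp [List.append_assoc]⟩
        · -- c' = [C] : w = s ++ [C,b,a,A,B] ++ t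
          simp only [List.cons_append, List.nil_append, List.cons.injEq] at h2
          obtain ⟨rfl, rfl⟩ := h2
          have h5 : s ++ [C, b, a, A, B] ++ t ∈ E := by
            simpa [List.append_assoc] using hw
          have hnd5 := ndE s t [C, b, a, A, B] h5
          simp at hnd5
          have neCb : C ≠ b := by tauto
          have neaA : a ≠ A := by tauto
          have hCb : C < b := lt1 s ([A,B]++t) C b a (by simpa [List.append_assoc] using h5) hab neCb
          have haA : a < A := lt2 (s ++ [C]) ([B]++t) b a A (by simpa [List.append_assoc] using h5) hab neaA
          have h6 := (estep s (A :: B :: t) (haA.trans (hAB.trans hBC)) hCb).mp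
            (by simpa [List.append_assoc] using h5)
          -- h6 : s ++ [b,a,C,A,B] ++ t ∈ E
          have h7 := (estep (s ++ [b,a]) t hAB hBC).mpr (by simpa [List.append_assoc] using h6)
          exact ⟨s, [B,C,A] ++ t, by simpa [List.append_assoc] using h7,
            by simp [List.append_assoc]⟩
        · -- c' = [C,A] : w = s ++ [C,A,b,a,B] ++ t
          simp only [List.cons_append, List.nil_append, List.cons.injEq] at h2
          obtain ⟨rfl, rfl, rfl⟩ := h2
          have h5 : s ++ [C, A, b, a, B] ++ t ∈ E := by
            simpa [List.append_assoc] using hw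
          have hnd5 := ndE s t [C, A, b, a, B] h5
          simp at hnd5
          have neAb : A ≠ b := by tauto
          have neaB : a ≠ B := by tauto
          have neaA : a ≠ A := by tauto
          have nebC : b ≠ C := by tauto
          have hAb : A < b := lt1 (s ++ [C]) ([B]++t) A b a (by simpa [List.append_assoc] using h5) hab neAb
          have haB : a < B := lt2 (s ++ [C,A]) t b a B (by simpa [List.append_assoc] using h5) hab neaB
          rcases neaA.lt_or_gt with haA | hAa
          · have h6 := (estep (s ++ [C]) (B :: t) haA hAb).mp
              (by simpa [List.append_assoc] using h5)
            -- h6 : s ++ [C,b,a,A,B] ++ t ∈ E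
            have neCb : C ≠ b := by tauto
            have hCb : C < b := lt1 s ([A,B]++t) C b a (by simpa [List.append_assoc] using h6) hab neCb
            have h7 := (estep s (A :: B :: t) (haA.trans (hAB.trans hBC)) hCb).mp
              (by simpa [List.append_assoc] using h6)
            -- h7 : s ++ [b,a,C,A,B] ++ t ∈ E
            have h8 := (estep (s ++ [b,a]) t hAB hBC).mpr (by simpa [List.append_assoc] using h7)
            exact ⟨s, [B,C,A] ++ t, by simpa [List.append_assoc] using h8,
              by simp [List.append_assoc]⟩
          · rcases nebC.lt_or_gt with hbC | hCb
            · have h6 := (estep s (a :: B :: t) hAb hbC).mpr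
                (by simpa [List.append_assoc] using h5)
              -- h6 : s ++ [b,C,A,a,B] ++ t ∈ E
              have h7 := (estep (s ++ [b]) (B :: t) hAa (hab.trans hbC)).mpr
                (by simpa [List.append_assoc] using h6)
              -- h7 : s ++ [b,a,C,A,B] ++ t ∈ E
              have h8 := (estep (s ++ [b,a]) t hAB hBC).mpr (by simpa [List.append_assoc] using h7)
              exact ⟨s, [B,C,A] ++ t, by simpa [List.append_assoc] using h8,
                by simp [List.append_assoc]⟩
            · have h6 := (estep (s ++ [C,A]) t haB (hBC.trans hCb)).mpr
                (by simpa [List.append_assoc] using h5)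
              -- h6 : s ++ [C,A,B,b,a] ++ t ∈ E
              have h7 := (estep s ([b,a] ++ t) hAB hBC).mpr (by simpa [List.append_assoc] using h6)
              exact ⟨s ++ [B,C,A], t, by simpa [List.append_assoc] using h7,
                by simp [List.append_assoc]⟩
        · simp only [List.cons_append, List.nil_append, List.cons.injEq] at h2
          obtain ⟨rfl, rfl, rfl, rfl⟩ := h2
          have h' := (estep s (r ++ [b,a] ++ v) hAB hBC).mpr
            (by simpa [List.append_assoc] using hw)
          exact ⟨s ++ [B,C,A] ++ r, v, by simpa [List.append_assoc] using h',
            by simp [List.append_assoc]⟩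
  · -- no 321
    rintro x ⟨u, v, hw, rfl⟩ ⟨p, q, x1, x2, x3, heq, h21, h32⟩
    rw [List.append_assoc] at heq
    rcases List.append_eq_append_iff.mp heq with ⟨a', rfl, rfl⟩ | ⟨c', rfl, h2⟩
    · exact e321 (u ++ [b,a] ++ a') q x1 x2 x3 (by simpa [List.append_assoc] using hw) h21 h32
    · rcases c' with _ | ⟨e1, _ | ⟨e2, _ | ⟨e3, r⟩⟩⟩
      · simp only [List.nil_append] at h2
        subst h2
        exact e321 (p ++ [b,a]) q x1 x2 x3 (by simpa [List.append_assoc] using hw) h21 h32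
      · simp only [List.cons_append, List.nil_append, List.cons.injEq] at h2
        obtain ⟨rfl, rfl⟩ := h2
        -- w = p ++ [x1,b,a,x2,x3] ++ q
        have h5 : p ++ [x1, b, a, x2, x3] ++ q ∈ E := by
          simpa [List.append_assoc] using hw
        have hnd5 := ndE p q [x1, b, a, x2, x3] h5
        simp at hnd5
        have nex1b : x1 ≠ b := by tauto
        have neax2 : a ≠ x2 := by tauto
        have hx1b : x1 < b := lt1 p ([x2,x3]++q) x1 b a (by simpa [List.append_assoc] using h5) hab nex1b
        have hax2 : a < x2 := lt2 (p ++ [x1]) ([x3]++q) b a x2 (by simpa [List.append_assoc] using h5) hab neax2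
        have h6 := (estep p (x2 :: x3 :: q) (hax2.trans h21) hx1b).mp
          (by simpa [List.append_assoc] using h5)
        exact e321 (p ++ [b,a]) q x1 x2 x3 (by simpa [List.append_assoc] using h6) h21 h32
      · simp only [List.cons_append, List.nil_append, List.cons.injEq] at h2
        obtain ⟨rfl, rfl, rfl⟩ := h2
        -- w = p ++ [x1,x2,b,a,x3] ++ q
        have h5 : p ++ [x1, x2, b, a, x3] ++ q ∈ E := by
          simpa [List.append_assoc] using hw
        have hnd5 := ndE p q [x1, x2, b, a, x3] h5
        simp at hnd5
        have nex2b : x2 ≠ b := by tauto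
        have neax3 : a ≠ x3 := by tauto
        have nex1b : x1 ≠ b := by tauto
        have hx2b : x2 < b := lt1 (p ++ [x1]) ([x3]++q) x2 b a (by simpa [List.append_assoc] using h5) hab nex2b
        have hax3 : a < x3 := lt2 (p ++ [x1,x2]) q b a x3 (by simpa [List.append_assoc] using h5) hab neax3
        have h6 := (estep (p ++ [x1]) (x3 :: q) (hax3.trans h32) hx2b).mp
          (by simpa [List.append_assoc] using h5)
        -- h6 : p ++ [x1,b,a,x2,x3] ++ q ∈ E
        have hx1b : x1 < b := lt1 p ([x2,x3]++q) x1 b a (by simpa [List.append_assoc] using h6) hab nex1b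
        have h7 := (estep p (x2 :: x3 :: q) ((hax3.trans h32).trans h21) hx1b).mp
          (by simpa [List.append_assoc] using h6)
        exact e321 (p ++ [b,a]) q x1 x2 x3 (by simpa [List.append_assoc] using h7) h21 h32
      · simp only [List.cons_append, List.nil_append, List.cons.injEq] at h2
        obtain ⟨rfl, rfl, rfl, rfl⟩ := h2
        exact e321 p (r ++ [b,a] ++ v) x1 x2 x3 (by simpa [List.append_assoc] using hw) h21 h32
end

section
/- Let w = w₁w₂⋯w_n be a partial permutation belonging to a well-nested family. If j ∈ [n−1] is any index with w_j > w_{j+1}, and ŵ is obtained by deleting w_j and w_{j+1} from w, then NDes(w) = {(w_j, w_{j+1})} ⊔ NDes(ŵ) and NRes(w) = NRes(ŵ). -/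
/-- Split a word at its first descent: returns `(prefix, x, y, suffix)` where
`x > y` is the first descent pair, so the word is `prefix ++ x :: y :: suffix`
and the prefix is weakly increasing before the descent. -/
def splitFirstDesc : List ℤ → Option (List ℤ × ℤ × ℤ × List ℤ)
  | [] => none
  | [_] => none
  | a :: b :: rest =>
    if b < a then some ([], a, b, rest)
    else
      match splitFirstDesc (b :: rest) with
      | none => none
      | some (p, x, y, s) => some (a :: p, x, y, s)

/-- Fueled computation of the nested descent set. -/
def ndesAux : ℕ → List ℤ → Finset (ℤ × ℤ)
  | 0, _ => ∅
  | fuel + 1, w =>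
    match splitFirstDesc w with
    | none => ∅
    | some (p, x, y, s) => insert (x, y) (ndesAux fuel (p ++ s))

/-- The nested descent set `NDes(w)`: repeatedly record and remove the first
descent pair. -/
def ndes (w : List ℤ) : Finset (ℤ × ℤ) := ndesAux w.length w

/-- Fueled computation of the nested residue. -/
def nresAux : ℕ → List ℤ → Finset ℤ
  | 0, w => w.toFinset
  | fuel + 1, w =>
    match splitFirstDesc w with
    | none => w.toFinset
    | some (p, _, _, s) => nresAux fuel (p ++ s)

/-- The nested residue `NRes(w)`: the letters remaining when no descent is left. -/
def nres (w : List ℤ) : Finset ℤ := nresAux w.length w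

theorem precStep_of_lt (l r : List ℤ) {A B C : ℤ} (hAB : A < B) (hBC : B < C) :
    PrecStep (l ++ B :: C :: A :: r) (l ++ C :: A :: B :: r) :=
  ⟨l, r, A, B, C, hAB, hBC, by simp, by simp⟩

theorem has321_of_lt (l r : List ℤ) {a b c : ℤ} (hba : b < a) (hcb : c < b) :
    Has321 (l ++ a :: b :: c :: r) :=
  ⟨l, r, a, b, c, by simp, hba, hcb⟩

theorem List.append_eq_append_cons₃ {α : Type*} {u v l r : List α} {a b c : α}
    (h : u ++ v = l ++ a :: b :: c :: r) :
    (∃ t, u = l ++ a :: b :: c :: t ∧ r = t ++ v) ∨ (u = l ++ [a] ∧ v = b :: c :: r) ∨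
      (u = l ++ [a, b] ∧ v = c :: r) ∨ ∃ t, l = u ++ t ∧ v = t ++ a :: b :: c :: r := by
  rcases List.append_eq_append_iff.mp h with ⟨t, rfl, ht⟩ | ⟨t, rfl, ht⟩
  · exact .inr (.inr (.inr ⟨t, rfl, ht⟩))
  · match t, ht with
    | [], ht => exact .inr (.inr (.inr ⟨[], by simp, by simpa using ht.symm⟩))
    | [_], ht => simp only [List.singleton_append, List.cons.injEq] at ht; simp [ht]
    | [_, _], ht => simp only [List.cons_append, List.cons.injEq] at ht; simp [ht]
    | _ :: _ :: _ :: t, ht =>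
      simp only [List.cons_append, List.cons.injEq] at ht
      obtain ⟨rfl, rfl, rfl, rfl⟩ := ht
      exact .inl ⟨t, by simp, rfl⟩

theorem WellNested.nodup {E : Set (List ℤ)} (hE : WellNested E) {w : List ℤ} (hw : w ∈ E) :
    w.Nodup :=
  hE.1 w hw

theorem WellNested.not_has321 {E : Set (List ℤ)} (hE : WellNested E) {w : List ℤ} (hw : w ∈ E) :
    ¬Has321 w :=
  hE.2.2 w hw

theorem WellNested.mem_iff_of_precStep {E : Set (List ℤ)} (hE : WellNested E) {x y : List ℤ}
    (h : PrecStep x y) : x ∈ E ↔ y ∈ E :=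
  hE.2.1 x y h

theorem WellNested.ne_of_sublist {E : Set (List ℤ)} (hE : WellNested E) {w : List ℤ}
    (hw : w ∈ E) {a b : ℤ} (h : List.Sublist [a, b] w) : a ≠ b := by
  simpa using (hE.nodup hw).sublist h

theorem WellNested.lt_of_mem_left {E : Set (List ℤ)} (hE : WellNested E) {l r : List ℤ}
    {c x y : ℤ} (hw : l ++ c :: x :: y :: r ∈ E) (hyx : y < x) : c < x :=
  (hE.ne_of_sublist hw (by simp)).lt_of_le
    (not_lt.mp fun hxc => hE.not_has321 hw (has321_of_lt l r hxc hyx))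

theorem WellNested.lt_of_mem_right {E : Set (List ℤ)} (hE : WellNested E) {l r : List ℤ}
    {c x y : ℤ} (hw : l ++ x :: y :: c :: r ∈ E) (hyx : y < x) : y < c :=
  (hE.ne_of_sublist hw (by simp)).lt_of_le
    (not_lt.mp fun hcy => hE.not_has321 hw (has321_of_lt l r hyx hcy))

theorem WellNested.move_descent_left {E : Set (List ℤ)} (hE : WellNested E) {l r : List ℤ}
    {c x y : ℤ} (hw : l ++ c :: x :: y :: r ∈ E) (hyx : y < x) (hyc : y < c) :
    l ++ x :: y :: c :: r ∈ E :=
  (hE.mem_iff_of_precStep (precStep_of_lt l r hyc (hE.lt_of_mem_left hw hyx))).mp hw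

theorem WellNested.move_descent_right {E : Set (List ℤ)} (hE : WellNested E) {l r : List ℤ}
    {c x y : ℤ} (hw : l ++ x :: y :: c :: r ∈ E) (hyx : y < x) (hcx : c < x) :
    l ++ c :: x :: y :: r ∈ E :=
  (hE.mem_iff_of_precStep (precStep_of_lt l r (hE.lt_of_mem_right hw hyx) hcx)).mpr hw

def eraseDescents (E : Set (List ℤ)) : Set (List ℤ) :=
  {z | ∃ u v : List ℤ, ∃ x y : ℤ, y < x ∧ u ++ x :: y :: v ∈ E ∧ z = u ++ v}

theorem mem_eraseDescents {E : Set (List ℤ)} {u v : List ℤ} {x y : ℤ}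
    (hw : u ++ x :: y :: v ∈ E) (hyx : y < x) : u ++ v ∈ eraseDescents E :=
  ⟨u, v, x, y, hyx, hw, rfl⟩

/- In the `straddle` lemmas the deleted descent `x y` sits inside a three-letter window of the
shorter word; the subscript counts the window letters to its left. -/
theorem WellNested.not_mem_of_has321_straddle₁ {E : Set (List ℤ)} (hE : WellNested E)
    {l r : List ℤ} {a b c x y : ℤ} (hw : l ++ a :: x :: y :: b :: c :: r ∈ E) (hyx : y < x)
    (hba : b < a) (hcb : c < b) : False := by
  have hya : y < a := (hE.lt_of_mem_right (l := l ++ [a]) (by simpa using hw) hyx).trans hba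
  exact hE.not_has321 (hE.move_descent_left hw hyx hya)
    (by simpa using has321_of_lt (l ++ [x, y]) r hba hcb)

theorem WellNested.not_mem_of_has321_straddle₂ {E : Set (List ℤ)} (hE : WellNested E)
    {l r : List ℤ} {a b c x y : ℤ} (hw : l ++ a :: b :: x :: y :: c :: r ∈ E) (hyx : y < x)
    (hba : b < a) (hcb : c < b) : False := by
  have hyb : y < b := (hE.lt_of_mem_right (l := l ++ [a, b]) (by simpa using hw) hyx).trans hcb
  have hw' := hE.move_descent_left (l := l ++ [a]) (by simpa using hw) hyx hyb
  exact hE.not_mem_of_has321_straddle₁ (l := l) (by simpa using hw') hyx hba hcb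

theorem WellNested.not_has321_of_mem_eraseDescents {E : Set (List ℤ)} (hE : WellNested E)
    {z : List ℤ} (hz : z ∈ eraseDescents E) : ¬Has321 z := by
  obtain ⟨u, v, x, y, hyx, hw, rfl⟩ := hz
  rintro ⟨l, r, a, b, c, h, hba, hcb⟩
  rcases List.append_eq_append_cons₃ (by simpa using h) with
    ⟨t, rfl, rfl⟩ | ⟨rfl, rfl⟩ | ⟨rfl, rfl⟩ | ⟨t, rfl, rfl⟩
  · exact hE.not_has321 hw (by simpa using has321_of_lt l (t ++ x :: y :: v) hba hcb)
  · exact hE.not_mem_of_has321_straddle₁ (by simpa using hw) hyx hba hcb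
  · exact hE.not_mem_of_has321_straddle₂ (by simpa using hw) hyx hba hcb
  · exact hE.not_has321 hw (by simpa using has321_of_lt (u ++ x :: y :: t) r hba hcb)

theorem WellNested.nodup_of_mem_eraseDescents {E : Set (List ℤ)} (hE : WellNested E)
    {z : List ℤ} (hz : z ∈ eraseDescents E) : z.Nodup := by
  obtain ⟨u, v, x, y, -, hw, rfl⟩ := hz
  exact (hE.nodup hw).sublist (by simp)

theorem WellNested.lift_precStep_straddle₁ {E : Set (List ℤ)} (hE : WellNested E)
    {α β : List ℤ} {A B C x y : ℤ} (hw : α ++ B :: x :: y :: C :: A :: β ∈ E) (hyx : y < x)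
    (hAB : A < B) (hBC : B < C) : α ++ C :: A :: B :: β ∈ eraseDescents E := by
  rcases (hE.ne_of_sublist hw (a := B) (b := y) (by simp)).lt_or_gt with hBy | hyB
  · have hAy := hAB.trans hBy
    rcases (hE.ne_of_sublist hw (a := x) (b := C) (by simp)).lt_or_gt with hxC | hCx
    -- `B x y C A ≾ B x C A y ≾ B C A x y ≾ C A B x y`
    · have h₁ := (hE.mem_iff_of_precStep (precStep_of_lt (α ++ [B, x]) β hAy (hyx.trans hxC))).mp
        (by simpa using hw)
      have h₂ := (hE.mem_iff_of_precStep (precStep_of_lt (α ++ [B]) (y :: β)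
        (hAy.trans hyx) hxC)).mp (by simpa using h₁)
      have h₃ := (hE.mem_iff_of_precStep (precStep_of_lt α (x :: y :: β) hAB hBC)).mp
        (by simpa using h₂)
      simpa using mem_eraseDescents (u := α ++ [C, A, B]) (by simpa using h₃) hyx
    · have h₁ := hE.move_descent_right (l := α ++ [B]) (by simpa using hw) hyx hCx
      exact (hE.not_has321 h₁ (by simpa using has321_of_lt (α ++ [B, C]) β hyx hAy)).elim
  · have h₁ := hE.move_descent_left hw hyx hyB
    have h₂ := (hE.mem_iff_of_precStep (precStep_of_lt (α ++ [x, y]) β hAB hBC)).mp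
      (by simpa using h₁)
    exact mem_eraseDescents (by simpa using h₂) hyx

theorem WellNested.lift_precStep_straddle₂ {E : Set (List ℤ)} (hE : WellNested E)
    {α β : List ℤ} {A B C x y : ℤ} (hw : α ++ B :: C :: x :: y :: A :: β ∈ E) (hyx : y < x)
    (hAB : A < B) (hBC : B < C) : α ++ C :: A :: B :: β ∈ eraseDescents E := by
  have hCx := hE.lt_of_mem_left (l := α ++ [B]) (by simpa using hw) hyx
  have h₁ := hE.move_descent_right (l := α ++ [B, C]) (by simpa using hw) hyx
    ((hAB.trans hBC).trans hCx)
  have h₂ := (hE.mem_iff_of_precStep (precStep_of_lt α (x :: y :: β) hAB hBC)).mp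
    (by simpa using h₁)
  simpa using mem_eraseDescents (u := α ++ [C, A, B]) (by simpa using h₂) hyx

theorem WellNested.lift_precStep_rev_straddle₁ {E : Set (List ℤ)} (hE : WellNested E)
    {α β : List ℤ} {A B C x y : ℤ} (hw : α ++ C :: x :: y :: A :: B :: β ∈ E) (hyx : y < x)
    (hAB : A < B) (hBC : B < C) : α ++ B :: C :: A :: β ∈ eraseDescents E := by
  have hyA := hE.lt_of_mem_right (l := α ++ [C]) (by simpa using hw) hyx
  have h₁ := hE.move_descent_left hw hyx ((hyA.trans hAB).trans hBC)
  have h₂ := (hE.mem_iff_of_precStep (precStep_of_lt (α ++ [x, y]) β hAB hBC)).mpr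
    (by simpa using h₁)
  exact mem_eraseDescents (by simpa using h₂) hyx

theorem WellNested.lift_precStep_rev_straddle₂ {E : Set (List ℤ)} (hE : WellNested E)
    {α β : List ℤ} {A B C x y : ℤ} (hw : α ++ C :: A :: x :: y :: B :: β ∈ E) (hyx : y < x)
    (hAB : A < B) (hBC : B < C) : α ++ B :: C :: A :: β ∈ eraseDescents E := by
  have hAx := hE.lt_of_mem_left (l := α ++ [C]) (by simpa using hw) hyx
  rcases (hE.ne_of_sublist hw (a := x) (b := B)
    (List.sublist_append_of_sublist_right (by simp))).lt_or_gt with hxB | hBx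
  -- `x y B C A ≾ x y C A B ≾ x C A y B ≾ C A x y B`
  · have h₁ := (hE.mem_iff_of_precStep (precStep_of_lt α (y :: B :: β) hAx
      (hxB.trans hBC))).mpr (by simpa using hw)
    have hAy : A < y := by
      refine (hE.ne_of_sublist h₁ (a := A) (b := y)
        (List.sublist_append_of_sublist_right (by simp))).lt_of_le (not_lt.mp fun hyA => ?_)
      exact hE.not_has321 h₁ (by simpa using has321_of_lt (α ++ [x]) (B :: β) (hAB.trans hBC) hyA)
    have h₂ := (hE.mem_iff_of_precStep (precStep_of_lt (α ++ [x]) (B :: β) hAy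
      ((hyx.trans hxB).trans hBC))).mpr (by simpa using h₁)
    have h₃ := (hE.mem_iff_of_precStep (precStep_of_lt (α ++ [x, y]) β hAB hBC)).mpr
      (by simpa using h₂)
    exact mem_eraseDescents (by simpa using h₃) hyx
  · have h₁ := hE.move_descent_right (l := α ++ [C, A]) (by simpa using hw) hyx hBx
    have h₂ := (hE.mem_iff_of_precStep (precStep_of_lt α (x :: y :: β) hAB hBC)).mpr
      (by simpa using h₁)
    simpa using mem_eraseDescents (u := α ++ [B, C, A]) (by simpa using h₂) hyx

theorem WellNested.mem_eraseDescents_of_precStep {E : Set (List ℤ)} (hE : WellNested E)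
    {z z' : List ℤ} (hz : z ∈ eraseDescents E) (h : PrecStep z z') : z' ∈ eraseDescents E := by
  obtain ⟨u, v, x, y, hyx, hw, rfl⟩ := hz
  obtain ⟨l, r, A, B, C, hAB, hBC, huv, rfl⟩ := h
  rcases List.append_eq_append_cons₃ (by simpa using huv) with
    ⟨t, rfl, rfl⟩ | ⟨rfl, rfl⟩ | ⟨rfl, rfl⟩ | ⟨t, rfl, rfl⟩
  · have hw' := (hE.mem_iff_of_precStep (precStep_of_lt l (t ++ x :: y :: v) hAB hBC)).mp
      (by simpa using hw)
    simpa using mem_eraseDescents (u := l ++ C :: A :: B :: t) (by simpa using hw') hyx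
  · simpa using hE.lift_precStep_straddle₁ (by simpa using hw) hyx hAB hBC
  · simpa using hE.lift_precStep_straddle₂ (by simpa using hw) hyx hAB hBC
  · have hw' := (hE.mem_iff_of_precStep (precStep_of_lt (u ++ x :: y :: t) r hAB hBC)).mp
      (by simpa using hw)
    simpa using mem_eraseDescents (u := u) (v := t ++ C :: A :: B :: r) (by simpa using hw') hyx

theorem WellNested.mem_eraseDescents_of_precStep_rev {E : Set (List ℤ)} (hE : WellNested E)
    {z z' : List ℤ} (hz : z ∈ eraseDescents E) (h : PrecStep z' z) : z' ∈ eraseDescents E := by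
  obtain ⟨u, v, x, y, hyx, hw, rfl⟩ := hz
  obtain ⟨l, r, A, B, C, hAB, hBC, rfl, huv⟩ := h
  rcases List.append_eq_append_cons₃ (by simpa using huv) with
    ⟨t, rfl, rfl⟩ | ⟨rfl, rfl⟩ | ⟨rfl, rfl⟩ | ⟨t, rfl, rfl⟩
  · have hw' := (hE.mem_iff_of_precStep (precStep_of_lt l (t ++ x :: y :: v) hAB hBC)).mpr
      (by simpa using hw)
    simpa using mem_eraseDescents (u := l ++ B :: C :: A :: t) (by simpa using hw') hyx
  · simpa using hE.lift_precStep_rev_straddle₁ (by simpa using hw) hyx hAB hBC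
  · simpa using hE.lift_precStep_rev_straddle₂ (by simpa using hw) hyx hAB hBC
  · have hw' := (hE.mem_iff_of_precStep (precStep_of_lt (u ++ x :: y :: t) r hAB hBC)).mpr
      (by simpa using hw)
    simpa using mem_eraseDescents (u := u) (v := t ++ B :: C :: A :: r) (by simpa using hw') hyx

theorem WellNested.eraseDescents {E : Set (List ℤ)} (hE : WellNested E) :
    WellNested (eraseDescents E) :=
  ⟨fun _ hz => hE.nodup_of_mem_eraseDescents hz,
    fun _ _ h => ⟨fun hz => hE.mem_eraseDescents_of_precStep hz h,
      fun hz => hE.mem_eraseDescents_of_precStep_rev hz h⟩,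
    fun _ hz => hE.not_has321_of_mem_eraseDescents hz⟩

theorem splitFirstDesc_append {p s : List ℤ} {x y : ℤ} (hp : (p ++ [x]).IsChain (· ≤ ·))
    (hyx : y < x) : splitFirstDesc (p ++ x :: y :: s) = some (p, x, y, s) := by
  induction p with
  | nil => simp [splitFirstDesc, hyx]
  | cons a p ih =>
    cases p with
    | nil =>
      have hax : a ≤ x := List.isChain_pair.mp hp
      simp [splitFirstDesc, not_lt.mpr hax, hyx]
    | cons b p =>
      obtain ⟨hab, hp⟩ := List.isChain_cons_cons.mp hp
      have ih := ih hp
      simp only [List.cons_append] at ih ⊢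
      simp [splitFirstDesc, not_lt.mpr hab, ih]

theorem eq_of_splitFirstDesc_eq_some {w p s : List ℤ} {x y : ℤ}
    (h : splitFirstDesc w = some (p, x, y, s)) :
    w = p ++ x :: y :: s ∧ y < x ∧ (p ++ [x]).IsChain (· ≤ ·) := by
  induction w using splitFirstDesc.induct generalizing p with
  | case1 | case2 => simp [splitFirstDesc] at h
  | case3 a b rest hba =>
    simp only [splitFirstDesc, if_pos hba, Option.some.injEq, Prod.mk.injEq] at h
    obtain ⟨rfl, rfl, rfl, rfl⟩ := h
    simpa using hba
  | case4 a b rest hba hnone => simp [splitFirstDesc, hba, hnone] at h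
  | case5 a b rest hba p' x' y' s' hsome ih =>
    simp only [splitFirstDesc, if_neg hba, hsome, Option.some.injEq, Prod.mk.injEq] at h
    obtain ⟨rfl, rfl, rfl, rfl⟩ := h
    obtain ⟨he, hyx, hch⟩ := ih hsome
    have hhead : (p' ++ [x']).head? = some b := by
      cases p' <;> simp only [List.nil_append, List.cons_append, List.cons.injEq] at he ⊢ <;>
        simp [he.1]
    refine ⟨by simp [he], hyx, List.isChain_cons.mpr ⟨?_, hch⟩⟩
    simpa [hhead] using hba

theorem isChain_of_splitFirstDesc_eq_none {w : List ℤ} (h : splitFirstDesc w = none) :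
    w.IsChain (· ≤ ·) := by
  induction w using splitFirstDesc.induct with
  | case1 => exact .nil
  | case2 a => exact .singleton a
  | case3 a b rest hba => simp [splitFirstDesc, hba] at h
  | case4 a b rest hba hnone ih => exact List.isChain_cons_cons.mpr ⟨not_lt.mp hba, ih hnone⟩
  | case5 a b rest hba p x y s hsome => simp [splitFirstDesc, hba, hsome] at h

theorem splitFirstDesc_eq_some_of_descent {u v p s : List ℤ} {a b x y : ℤ}
    (h : splitFirstDesc (u ++ a :: b :: v) = some (p, x, y, s)) (hba : b < a)
    (h321 : ¬Has321 (u ++ a :: b :: v)) :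
    (p = u ∧ x = a ∧ y = b ∧ s = v) ∨ ∃ m, u = p ++ x :: y :: m ∧ s = m ++ a :: b :: v := by
  obtain ⟨he, hyx, hch⟩ := eq_of_splitFirstDesc_eq_some h
  have hab : ∀ l₁ l₂, p ++ [x] = l₁ ++ a :: b :: l₂ → False := fun l₁ l₂ hl =>
    (List.isChain_iff_forall_rel_of_append_cons_cons.mp hch hl).not_gt hba
  rcases List.append_eq_append_iff.mp he with ⟨t, rfl, ht⟩ | ⟨t, rfl, ht⟩
  · match t, ht with
    | [], ht => simp_all
    | [_], ht =>
      simp only [List.singleton_append, List.cons.injEq] at ht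
      exact (hab u [] (by simp [ht.1, ht.2.1])).elim
    | _ :: _ :: t, ht =>
      simp only [List.cons_append, List.cons.injEq] at ht
      exact (hab u (t ++ [x]) (by simp [ht.1, ht.2.1])).elim
  · match t, ht with
    | [], ht => simp_all
    | [_], ht =>
      simp only [List.singleton_append, List.cons.injEq] at ht
      obtain ⟨rfl, rfl, rfl⟩ := ht
      exact (h321 (by simpa using has321_of_lt p v hyx hba)).elim
    | _ :: _ :: m, ht =>
      simp only [List.cons_append, List.cons.injEq] at ht
      obtain ⟨rfl, rfl, rfl⟩ := ht
      exact .inr ⟨m, rfl, rfl⟩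

theorem ndesAux_succ {n : ℕ} {w : List ℤ} (hw : w.length ≤ n) :
    ndesAux (n + 1) w = ndesAux n w := by
  induction n generalizing w with
  | zero => simp [List.length_eq_zero_iff.mp (Nat.le_zero.mp hw), ndesAux, splitFirstDesc]
  | succ n ih =>
    rcases h : splitFirstDesc w with _ | ⟨p, x, y, s⟩
    · simp [ndesAux, h]
    · obtain ⟨rfl, -, -⟩ := eq_of_splitFirstDesc_eq_some h
      rw [ndesAux.eq_2, ndesAux.eq_2, h]
      have hlen : (p ++ s).length ≤ n := by
        simp only [List.length_append, List.length_cons] at hw ⊢; omega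
      exact congrArg (insert (x, y)) (ih hlen)

theorem nresAux_succ {n : ℕ} {w : List ℤ} (hw : w.length ≤ n) :
    nresAux (n + 1) w = nresAux n w := by
  induction n generalizing w with
  | zero => simp [List.length_eq_zero_iff.mp (Nat.le_zero.mp hw), nresAux, splitFirstDesc]
  | succ n ih =>
    rcases h : splitFirstDesc w with _ | ⟨p, x, y, s⟩
    · simp [nresAux, h]
    · obtain ⟨rfl, -, -⟩ := eq_of_splitFirstDesc_eq_some h
      rw [nresAux.eq_2, nresAux.eq_2, h]
      have hlen : (p ++ s).length ≤ n := by
        simp only [List.length_append, List.length_cons] at hw ⊢; omega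
      exact ih hlen

theorem ndes_of_splitFirstDesc {w p s : List ℤ} {x y : ℤ}
    (h : splitFirstDesc w = some (p, x, y, s)) : ndes w = insert (x, y) (ndes (p ++ s)) := by
  obtain ⟨rfl, -, -⟩ := eq_of_splitFirstDesc_eq_some h
  have hlen : (p ++ x :: y :: s).length = (p ++ s).length + 1 + 1 := by
    simp only [List.length_append, List.length_cons]; omega
  rw [ndes, hlen, ndesAux.eq_2, h]
  exact congrArg (insert (x, y)) (ndesAux_succ le_rfl)

theorem nres_of_splitFirstDesc {w p s : List ℤ} {x y : ℤ}
    (h : splitFirstDesc w = some (p, x, y, s)) : nres w = nres (p ++ s) := by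
  obtain ⟨rfl, -, -⟩ := eq_of_splitFirstDesc_eq_some h
  have hlen : (p ++ x :: y :: s).length = (p ++ s).length + 1 + 1 := by
    simp only [List.length_append, List.length_cons]; omega
  rw [nres, hlen, nresAux.eq_2, h]
  exact nresAux_succ le_rfl

theorem mem_of_mem_ndesAux {n : ℕ} {w : List ℤ} {c d : ℤ} (h : (c, d) ∈ ndesAux n w) :
    c ∈ w := by
  induction n generalizing w with
  | zero => simp [ndesAux] at h
  | succ n ih =>
    rcases hs : splitFirstDesc w with _ | ⟨p, x, y, s⟩
    · simp [ndesAux, hs] at h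
    · obtain ⟨rfl, -, -⟩ := eq_of_splitFirstDesc_eq_some hs
      simp only [ndesAux, hs, Finset.mem_insert, Prod.mk.injEq] at h
      rcases h with ⟨rfl, -⟩ | h
      · simp
      · exact List.Sublist.subset (by simp) (ih h)

theorem not_mem_ndes_of_nodup {u v : List ℤ} {a b : ℤ} (h : (u ++ a :: b :: v).Nodup) :
    (a, b) ∉ ndes (u ++ v) := fun hab =>
  (List.nodup_cons.mp (List.nodup_middle.mp h)).1
    (List.Sublist.subset (by simp) (mem_of_mem_ndesAux hab))

theorem ndes_nres_of_descent {E : Set (List ℤ)} (hE : WellNested E) {u v : List ℤ} {a b : ℤ}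
    (hw : u ++ a :: b :: v ∈ E) (hba : b < a) :
    ndes (u ++ a :: b :: v) = insert (a, b) (ndes (u ++ v)) ∧
      nres (u ++ a :: b :: v) = nres (u ++ v) := by
  rcases h : splitFirstDesc (u ++ a :: b :: v) with _ | ⟨p, x, y, s⟩
  · exact ((List.isChain_iff_forall_rel_of_append_cons_cons.mp
      (isChain_of_splitFirstDesc_eq_none h) rfl).not_gt hba).elim
  rcases splitFirstDesc_eq_some_of_descent h hba (hE.not_has321 hw) with
    ⟨rfl, rfl, rfl, rfl⟩ | ⟨m, rfl, rfl⟩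
  · exact ⟨ndes_of_splitFirstDesc h, nres_of_splitFirstDesc h⟩
  obtain ⟨-, hyx, hp⟩ := eq_of_splitFirstDesc_eq_some h
  have hw' : (p ++ m) ++ a :: b :: v ∈ eraseDescents E := by
    simpa using mem_eraseDescents (u := p) (by simpa using hw) hyx
  have h' : splitFirstDesc ((p ++ x :: y :: m) ++ v) = some (p, x, y, m ++ v) := by
    simpa using splitFirstDesc_append (s := m ++ v) hp hyx
  obtain ⟨ih_ndes, ih_nres⟩ := ndes_nres_of_descent hE.eraseDescents hw' hba
  simp only [List.append_assoc] at ih_ndes ih_nres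
  refine ⟨?_, ?_⟩
  · rw [ndes_of_splitFirstDesc h, ndes_of_splitFirstDesc h', ih_ndes, Finset.insert_comm]
  · rw [nres_of_splitFirstDesc h, nres_of_splitFirstDesc h', ih_nres]
termination_by u.length
decreasing_by subst_vars; simp

/-- If `w` is a partial permutation in a well-nested family and
`j` is *any* descent of `w` (so `w = u ++ [a, b] ++ v` with `b < a`), then
`NDes(w) = {(a,b)} ⊔ NDes(u ++ v)` (a disjoint union) and
`NRes(w) = NRes(u ++ v)`. -/
theorem stmt11 (E : Set (List ℤ)) (hE : WellNested E) (w : List ℤ) (hw : w ∈ E)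
    (u v : List ℤ) (a b : ℤ) (hsplit : w = u ++ [a, b] ++ v) (hdesc : b < a) :
    ndes w = insert (a, b) (ndes (u ++ v)) ∧ (a, b) ∉ ndes (u ++ v) ∧
      nres w = nres (u ++ v) := by
  obtain rfl : w = u ++ a :: b :: v := by simpa using hsplit
  obtain ⟨hndes, hnres⟩ := ndes_nres_of_descent hE hw hdesc
  exact ⟨hndes, not_mem_ndes_of_nodup (hE.nodup hw), hnres⟩
end

section
/- Let w = w₁⋯w_n be a partial permutation in a well-nested family, and suppose i,j,k,l ∈ [n] are indices such that (w_i, w_j) and (w_k, w_l) are both in NDes(w), with w_i < w_k and w_j < w_l. Then i < j < k < l. -/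
theorem List.Nodup.lt_of_pair_sublist {α : Type*} {w : List α} (hw : w.Nodup) {i j : ℕ}
    (hi : i < w.length) (hj : j < w.length) (h : [w.get ⟨i, hi⟩, w.get ⟨j, hj⟩].Sublist w) :
    i < j := by
  obtain ⟨f, hf⟩ := List.sublist_iff_exists_fin_orderEmbedding_get_eq.mp h
  have h0 := hw.get_inj_iff.mp (hf 0)
  have h1 := hw.get_inj_iff.mp (hf 1)
  have : f 0 < f 1 := f.lt_iff_lt.mpr (show (0 : Fin 2) < 1 by decide)
  rwa [← h0, ← h1] at this

theorem List.Nodup.ne_of_pair_sublist {α : Type*} {l : List α} (h : l.Nodup) {x y : α}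
    (hs : [x, y].Sublist l) : x ≠ y := by
  simpa using hs.nodup h

theorem List.Nodup.window_five_distinct {α : Type*} {γ δ : List α} {p q r s t : α}
    (h : (γ ++ p :: q :: r :: s :: t :: δ).Nodup) :
    p ≠ q ∧ p ≠ r ∧ p ≠ s ∧ p ≠ t ∧ q ≠ r ∧ q ≠ s ∧ q ≠ t ∧ r ≠ s ∧ r ≠ t ∧ s ≠ t := by
  have h5 : [p, q, r, s, t].Nodup := List.Sublist.nodup (by simp) h
  simp only [List.nodup_cons, List.mem_cons, List.not_mem_nil,
    not_or, List.nodup_nil, and_true] at h5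
  tauto

theorem List.append_eq_window_cases {ι : Type*} {α β γ δ : List ι} {t₁ t₂ t₃ : ι}
    (h : α ++ β = γ ++ t₁ :: t₂ :: t₃ :: δ) :
    (∃ ρ, α = γ ++ t₁ :: t₂ :: t₃ :: ρ ∧ δ = ρ ++ β) ∨
    (∃ ρ, γ = α ++ ρ ∧ β = ρ ++ t₁ :: t₂ :: t₃ :: δ) ∨
    (α = γ ++ [t₁] ∧ β = t₂ :: t₃ :: δ) ∨
    (α = γ ++ [t₁, t₂] ∧ β = t₃ :: δ) := by
  rcases List.append_eq_append_iff.mp h with ⟨ρ, hγ, hβ⟩ | ⟨ρ, hα, hX⟩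
  · exact .inr (.inl ⟨ρ, hγ, hβ⟩)
  · match ρ, hX with
    | [], hX => exact .inr (.inl ⟨[], by simp [hα], by simpa using hX.symm⟩)
    | [_], hX =>
      simp only [List.cons_append, List.nil_append, List.cons.injEq] at hX
      exact .inr (.inr (.inl ⟨by rw [hα, hX.1], hX.2.symm⟩))
    | [_, _], hX =>
      simp only [List.cons_append, List.nil_append, List.cons.injEq] at hX
      exact .inr (.inr (.inr ⟨by rw [hα, hX.1, hX.2.1], hX.2.2.symm⟩))
    | _ :: _ :: _ :: ρ, hX =>
      simp only [List.cons_append, List.cons.injEq] at hX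
      exact .inl ⟨ρ, by rw [hα, hX.1, hX.2.1, hX.2.2.1], hX.2.2.2⟩

theorem append_eq_firstDescent_cases {α : Type*} [Preorder α] {u v u₂ v₂ : List α} {a₂ b₂ : α}
    (hu : u.Pairwise (· ≤ ·)) (hb₂ : b₂ < a₂) (he : u ++ v = u₂ ++ a₂ :: b₂ :: v₂) :
    (u = u₂ ++ [a₂] ∧ v = b₂ :: v₂) ∨ ∃ t, u₂ = u ++ t ∧ v = t ++ a₂ :: b₂ :: v₂ := by
  rcases List.append_eq_append_iff.mp he with ⟨t, hu₂, hv⟩ | ⟨ρ, hu', hv⟩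
  · exact .inr ⟨t, hu₂, hv⟩
  match ρ, hv with
  | [], hv => exact .inr ⟨[], by simpa using hu'.symm, by simpa using hv.symm⟩
  | [_], hv =>
    simp only [List.cons_append, List.nil_append, List.cons.injEq] at hv
    exact .inl ⟨by rw [hu', hv.1], hv.2.symm⟩
  | _ :: _ :: ρ, hv =>
    simp only [List.cons_append, List.cons.injEq] at hv
    obtain ⟨rfl, rfl, -⟩ := hv
    subst hu'
    have : a₂ ≤ b₂ := by simp_all [List.pairwise_append]
    exact (hb₂.not_ge this).elim

open Relation

def PrecEquiv : List ℤ → List ℤ → Prop := ReflTransGen (SymmGen PrecStep)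

-- The `PrecEquiv`-class of such a word is the smallest well-nested family containing it.
def IsWellNestedWord (w : List ℤ) : Prop := w.Nodup ∧ ∀ z, PrecEquiv w z → ¬Has321 z

namespace PrecEquiv

theorem symm {x y : List ℤ} (h : PrecEquiv x y) : PrecEquiv y x :=
  Std.Symm.symm (r := ReflTransGen (SymmGen PrecStep)) _ _ h

theorem trans {x y z : List ℤ} (h : PrecEquiv x y) (h' : PrecEquiv y z) : PrecEquiv x z :=
  ReflTransGen.trans h h'

theorem perm {x y : List ℤ} (h : PrecEquiv x y) : x.Perm y := by
  have step : ∀ {x y : List ℤ}, PrecStep x y → x.Perm y := by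
    rintro _ _ ⟨u, v, A, B, C, -, -, rfl, rfl⟩
    exact ((List.Perm.swap' _ _ (.refl _)).trans (.cons C (.swap' _ _ (.refl _)))).append_left u
      |>.append_right v
  induction h with
  | refl => rfl
  | tail _ hs ih => exact ih.trans (hs.elim step fun h => (step h).symm)

theorem fwd (γ δ : List ℤ) {A B C : ℤ} (hAB : A < B) (hBC : B < C) :
    PrecEquiv (γ ++ B :: C :: A :: δ) (γ ++ C :: A :: B :: δ) :=
  .single (.of_rel ⟨γ, δ, A, B, C, hAB, hBC, by simp, by simp⟩)

theorem bwd (γ δ : List ℤ) {A B C : ℤ} (hAB : A < B) (hBC : B < C) :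
    PrecEquiv (γ ++ C :: A :: B :: δ) (γ ++ B :: C :: A :: δ) :=
  (fwd γ δ hAB hBC).symm

theorem descent_past (δ : List ℤ) {c y : ℤ} :
    ∀ (γ t : List ℤ), (∀ e ∈ t, y < e ∧ e < c) →
      PrecEquiv (γ ++ t ++ c :: y :: δ) (γ ++ c :: y :: (t ++ δ))
  | γ, [], _ => by rw [List.append_nil, List.nil_append]; exact .refl
  | γ, e :: t, ht => by
    have m₁ := descent_past δ (γ ++ [e]) t fun f hf => ht f (by simp [hf])
    have m₂ := fwd γ (t ++ δ) (ht e (by simp)).1 (ht e (by simp)).2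
    simpa using m₁.trans (by simpa using m₂)

end PrecEquiv

namespace IsWellNestedWord

variable {w : List ℤ}

theorem of_precEquiv (h : IsWellNestedWord w) {z : List ℤ} (hz : PrecEquiv w z) :
    IsWellNestedWord z :=
  ⟨hz.perm.nodup_iff.mp h.1, fun y hy => h.2 y (hz.trans hy)⟩

theorem false_of_desc3 (h : IsWellNestedWord w) (γ δ : List ℤ) {c₁ c₂ c₃ : ℤ}
    (hw : w = γ ++ c₁ :: c₂ :: c₃ :: δ) (h₁₂ : c₂ < c₁) (h₂₃ : c₃ < c₂) : False :=
  h.2 w .refl ⟨γ, δ, c₁, c₂, c₃, by simpa using hw, h₁₂, h₂₃⟩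

end IsWellNestedWord

theorem WellNested.isWellNestedWord {E : Set (List ℤ)} (hE : WellNested E) {w : List ℤ}
    (hw : w ∈ E) : IsWellNestedWord w := by
  refine ⟨hE.1 w hw, fun z hz => hE.2.2 z ?_⟩
  induction hz with
  | refl => exact hw
  | tail _ hs ih => exact hs.elim (fun h => (hE.2.1 _ _ h).mp ih) fun h => (hE.2.1 _ _ h).mpr ih

theorem IsWellNestedWord.lt_of_mem_of_pairwise {γ L δ : List ℤ} {a b : ℤ}
    (hW : IsWellNestedWord (γ ++ a :: b :: (L ++ δ))) (hba : b < a)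
    (hL : L.Pairwise (· ≤ ·)) : ∀ e ∈ L, b < e := by
  rcases L with _ | ⟨e₀, L⟩
  · simp
  have hne : b ≠ e₀ := hW.1.ne_of_pair_sublist
    (show [b, e₀] <:+: _ from ⟨γ ++ [a], L ++ δ, by simp⟩).sublist
  have hbe : b < e₀ := hne.lt_or_gt.resolve_right (hW.false_of_desc3 γ (L ++ δ) (by simp) hba)
  intro e he
  rcases List.mem_cons.mp he with rfl | he
  · exact hbe
  · exact hbe.trans_le (List.rel_of_pairwise_cons hL he)

theorem splitFirstDesc_eq_some {w u v : List ℤ} {a b : ℤ}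
    (h : splitFirstDesc w = some (u, a, b, v)) :
    w = u ++ a :: b :: v ∧ b < a ∧ (u ++ [a]).IsChain (· ≤ ·) := by
  induction w using splitFirstDesc.induct generalizing u with
  | case1 | case2 => simp [splitFirstDesc] at h
  | case3 x y r hyx =>
    simp only [splitFirstDesc, hyx, if_true, Option.some.injEq, Prod.mk.injEq] at h
    obtain ⟨rfl, rfl, rfl, rfl⟩ := h
    simp [hyx]
  | case4 x y r hyx hs => simp [splitFirstDesc, hyx, hs] at h
  | case5 x y r hyx p c d s hs ih =>
    simp only [splitFirstDesc, hyx, if_false, hs, Option.some.injEq, Prod.mk.injEq] at h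
    obtain ⟨rfl, rfl, rfl, rfl⟩ := h
    obtain ⟨hyr, hdc, hp⟩ := ih hs
    have hhead : (p ++ [c]).head? = some y := by
      rcases p with _ | ⟨q, p⟩ <;>
        simp only [List.nil_append, List.cons_append, List.cons.injEq] at hyr ⊢ <;> simp [hyr.1]
    refine ⟨by simp [hyr], hdc, ?_⟩
    rw [List.cons_append, List.isChain_cons, hhead]
    exact ⟨by simpa using hyx, hp⟩

theorem ndesAux_of_eq_none {w : List ℤ} (hs : splitFirstDesc w = none) :
    ∀ f, ndesAux f w = ∅
  | 0 => rfl
  | _ + 1 => by rw [ndesAux, hs]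

theorem ndesAux_succ_of_eq_some {f : ℕ} {w u v : List ℤ} {a b : ℤ}
    (hs : splitFirstDesc w = some (u, a, b, v)) :
    ndesAux (f + 1) w = insert (a, b) (ndesAux f (u ++ v)) := by
  rw [ndesAux, hs]

theorem length_eq_of_splitFirstDesc_eq_some {w u v : List ℤ} {a b : ℤ}
    (hs : splitFirstDesc w = some (u, a, b, v)) : w.length = (u ++ v).length + 1 + 1 := by
  rw [(splitFirstDesc_eq_some hs).1]; simp; omega

theorem ndesAux_eq_ndes : ∀ (f : ℕ) {w : List ℤ}, w.length ≤ f → ndesAux f w = ndes w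
  | 0, w, hw => by rw [List.eq_nil_of_length_eq_zero (Nat.le_zero.mp hw)]; rfl
  | f + 1, w, hw => by
    rcases hs : splitFirstDesc w with _ | ⟨u, a, b, v⟩
    · rw [ndes, ndesAux_of_eq_none hs, ndesAux_of_eq_none hs]
    · have hlen := length_eq_of_splitFirstDesc_eq_some hs
      rw [ndes, hlen, ndesAux_succ_of_eq_some hs, ndesAux_succ_of_eq_some hs,
        ndesAux_eq_ndes f (by omega), ndesAux_eq_ndes _ (by omega)]
termination_by _ w => w.length
decreasing_by all_goals simp only [List.length_append] at hlen ⊢; omega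

theorem ndes_eq_insert {w u v : List ℤ} {a b : ℤ} (hs : splitFirstDesc w = some (u, a, b, v)) :
    ndes w = insert (a, b) (ndes (u ++ v)) := by
  rw [ndes, length_eq_of_splitFirstDesc_eq_some hs, ndesAux_succ_of_eq_some hs,
    ndesAux_eq_ndes _ (by omega)]

theorem exists_firstDescent_of_mem_ndes {w : List ℤ} {p : ℤ × ℤ} (h : p ∈ ndes w) :
    ∃ u a b v, w = u ++ a :: b :: v ∧ b < a ∧ (u ++ [a]).Pairwise (· ≤ ·) ∧
      ndes w = insert (a, b) (ndes (u ++ v)) := by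
  rcases hs : splitFirstDesc w with _ | ⟨u, a, b, v⟩
  · simp [ndes, ndesAux_of_eq_none hs] at h
  obtain ⟨hw, hba, hu⟩ := splitFirstDesc_eq_some hs
  exact ⟨u, a, b, v, hw, hba, List.isChain_iff_pairwise.mp hu, ndes_eq_insert hs⟩

theorem sublist_of_mem_ndes {w : List ℤ} {x y : ℤ} (h : (x, y) ∈ ndes w) :
    [x, y].Sublist w ∧ y < x := by
  obtain ⟨u, a, b, v, hw, hba, -, hndes⟩ := exists_firstDescent_of_mem_ndes h
  rw [hndes, Finset.mem_insert, Prod.mk.injEq] at h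
  rw [hw]
  rcases h with ⟨rfl, rfl⟩ | h
  · exact ⟨by simp, hba⟩
  · obtain ⟨hs, hyx⟩ := sublist_of_mem_ndes h
    exact ⟨hs.trans (by simp), hyx⟩
termination_by w.length
decreasing_by simp [hw]

section Windows

variable {γ δ : List ℤ} {a b A B C : ℤ}

-- In `…_one` (`…_two`) the pair `a b` sits after the first (second) letter of the window of a
-- move; 321-freeness lets the pair leave the window, so that the move can be performed.
theorem exists_lift_window_fwd_one (hba : b < a) (hAB : A < B) (hBC : B < C)
    (hW : IsWellNestedWord (γ ++ B :: a :: b :: C :: A :: δ)) :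
    ∃ α β, γ ++ C :: A :: B :: δ = α ++ β ∧
      PrecEquiv (γ ++ B :: a :: b :: C :: A :: δ) (α ++ a :: b :: β) := by
  obtain ⟨hBa, hBb, -, -, -, haC, -, hbC, -, -⟩ := hW.1.window_five_distinct
  replace hbC : b < C := hbC.lt_or_gt.resolve_right
    (hW.false_of_desc3 (γ ++ [B]) (A :: δ) (by simp) hba)
  rcases hBb.lt_or_gt with hBb | hbB
  · have m₁ : PrecEquiv (γ ++ B :: a :: b :: C :: A :: δ) (γ ++ B :: a :: C :: A :: b :: δ) := by
      simpa using PrecEquiv.fwd (γ ++ [B, a]) δ (hAB.trans hBb) hbC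
    rcases haC.lt_or_gt with haC | hCa
    · have m₂ : PrecEquiv (γ ++ B :: a :: C :: A :: b :: δ) (γ ++ B :: C :: A :: a :: b :: δ) := by
        simpa using PrecEquiv.fwd (γ ++ [B]) (b :: δ) (by omega) haC
      have m₃ := PrecEquiv.fwd γ (a :: b :: δ) hAB hBC
      exact ⟨γ ++ [C, A, B], δ, by simp, by simpa using m₁.trans (m₂.trans m₃)⟩
    · exact ((hW.of_precEquiv m₁).false_of_desc3 (γ ++ [B]) (b :: δ) (by simp) hCa
        (show A < C by omega)).elim
  · rcases hBa.lt_or_gt with hBa | haB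
    · have m₁ := PrecEquiv.fwd γ (C :: A :: δ) hbB hBa
      have m₂ := PrecEquiv.fwd (γ ++ [a, b]) δ hAB hBC
      exact ⟨γ, C :: A :: B :: δ, by simp, by simpa using m₁.trans (by simpa using m₂)⟩
    · exact (hW.false_of_desc3 γ (C :: A :: δ) rfl haB hba).elim

theorem exists_lift_window_fwd_two (hba : b < a) (hAB : A < B) (hBC : B < C)
    (hW : IsWellNestedWord (γ ++ B :: C :: a :: b :: A :: δ)) :
    ∃ α β, γ ++ C :: A :: B :: δ = α ++ β ∧
      PrecEquiv (γ ++ B :: C :: a :: b :: A :: δ) (α ++ a :: b :: β) := by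
  obtain ⟨-, -, -, -, hCa, -, -, -, -, hbA⟩ := hW.1.window_five_distinct
  replace hCa : C < a := hCa.lt_or_gt.resolve_right
    fun haC => hW.false_of_desc3 (γ ++ [B]) (A :: δ) (by simp) haC hba
  replace hbA : b < A := hbA.lt_or_gt.resolve_right
    (hW.false_of_desc3 (γ ++ [B, C]) δ (by simp) hba)
  have m₁ : PrecEquiv (γ ++ B :: C :: a :: b :: A :: δ) (γ ++ B :: C :: A :: a :: b :: δ) := by
    simpa using PrecEquiv.bwd (γ ++ [B, C]) δ hbA (by omega)
  have m₂ := PrecEquiv.fwd γ (a :: b :: δ) hAB hBC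
  exact ⟨γ ++ [C, A, B], δ, by simp, by simpa using m₁.trans m₂⟩

theorem exists_lift_window_bwd_one (hba : b < a) (hAB : A < B) (hBC : B < C)
    (hW : IsWellNestedWord (γ ++ C :: a :: b :: A :: B :: δ)) :
    ∃ α β, γ ++ B :: C :: A :: δ = α ++ β ∧
      PrecEquiv (γ ++ C :: a :: b :: A :: B :: δ) (α ++ a :: b :: β) := by
  obtain ⟨hCa, hCb, -, -, -, -, -, -, -, -⟩ := hW.1.window_five_distinct
  replace hCa : C < a := hCa.lt_or_gt.resolve_right
    fun haC => hW.false_of_desc3 γ (A :: B :: δ) rfl haC hba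
  have hbC : b < C := hCb.lt_or_gt.resolve_left
    fun hCb => hW.false_of_desc3 (γ ++ [C]) (B :: δ) (by simp) hba (hAB.trans (hBC.trans hCb))
  have m₁ := PrecEquiv.fwd γ (A :: B :: δ) hbC hCa
  have m₂ := PrecEquiv.bwd (γ ++ [a, b]) δ hAB hBC
  exact ⟨γ, B :: C :: A :: δ, by simp, by simpa using m₁.trans (by simpa using m₂)⟩

theorem exists_lift_window_bwd_two (hba : b < a) (hAB : A < B) (hBC : B < C)
    (hW : IsWellNestedWord (γ ++ C :: A :: a :: b :: B :: δ)) :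
    ∃ α β, γ ++ B :: C :: A :: δ = α ++ β ∧
      PrecEquiv (γ ++ C :: A :: a :: b :: B :: δ) (α ++ a :: b :: β) := by
  obtain ⟨-, hCa, hCb, -, hAa, hAb, -, -, -, hbB⟩ := hW.1.window_five_distinct
  have hbC : b < C := hCb.lt_or_gt.resolve_left
    fun hCb => hW.false_of_desc3 (γ ++ [C, A]) δ (by simp) hba (hBC.trans hCb)
  rcases hCa.lt_or_gt with hCa | haC
  · replace hbB : b < B := hbB.lt_or_gt.resolve_right
      (hW.false_of_desc3 (γ ++ [C, A]) δ (by simp) hba)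
    have m₁ : PrecEquiv (γ ++ C :: A :: a :: b :: B :: δ) (γ ++ C :: A :: B :: a :: b :: δ) := by
      simpa using PrecEquiv.bwd (γ ++ [C, A]) δ hbB (by omega)
    have m₂ := PrecEquiv.bwd γ (a :: b :: δ) hAB hBC
    exact ⟨γ ++ [B, C, A], δ, by simp, by simpa using m₁.trans m₂⟩
  rcases hAb.lt_or_gt with hAb | hbA
  · have m₁ := PrecEquiv.bwd γ (b :: B :: δ) (show A < a by omega) haC
    have m₂ := PrecEquiv.bwd (γ ++ [a]) (B :: δ) hAb hbC
    have m₃ := PrecEquiv.bwd (γ ++ [a, b]) δ hAB hBC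
    exact ⟨γ, B :: C :: A :: δ, by simp,
      m₁.trans (by simpa using m₂.trans (by simpa using m₃))⟩
  rcases hAa.lt_or_gt with hAa | haA
  · have m₁ : PrecEquiv (γ ++ C :: A :: a :: b :: B :: δ) (γ ++ C :: a :: b :: A :: B :: δ) := by
      simpa using PrecEquiv.fwd (γ ++ [C]) (B :: δ) hbA hAa
    exact ((hW.of_precEquiv m₁).false_of_desc3 γ (A :: B :: δ) rfl haC hba).elim
  · exact (hW.false_of_desc3 (γ ++ [C]) (B :: δ) (by simp) haA hba).elim

end Windows

section Deletion

variable {α β : List ℤ} {a b : ℤ}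

theorem exists_lift_of_window {γ δ : List ℤ} {t₁ t₂ t₃ s₁ s₂ s₃ : ℤ}
    (hmove : ∀ γ δ, PrecEquiv (γ ++ t₁ :: t₂ :: t₃ :: δ) (γ ++ s₁ :: s₂ :: s₃ :: δ))
    (hone : ∀ {γ δ}, IsWellNestedWord (γ ++ t₁ :: a :: b :: t₂ :: t₃ :: δ) →
      ∃ α β, γ ++ s₁ :: s₂ :: s₃ :: δ = α ++ β ∧
        PrecEquiv (γ ++ t₁ :: a :: b :: t₂ :: t₃ :: δ) (α ++ a :: b :: β))
    (htwo : ∀ {γ δ}, IsWellNestedWord (γ ++ t₁ :: t₂ :: a :: b :: t₃ :: δ) →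
      ∃ α β, γ ++ s₁ :: s₂ :: s₃ :: δ = α ++ β ∧
        PrecEquiv (γ ++ t₁ :: t₂ :: a :: b :: t₃ :: δ) (α ++ a :: b :: β))
    (hW : IsWellNestedWord (α ++ a :: b :: β)) (he : α ++ β = γ ++ t₁ :: t₂ :: t₃ :: δ) :
    ∃ α' β', γ ++ s₁ :: s₂ :: s₃ :: δ = α' ++ β' ∧
      PrecEquiv (α ++ a :: b :: β) (α' ++ a :: b :: β') := by
  rcases List.append_eq_window_cases he with ⟨ρ, rfl, rfl⟩ | ⟨ρ, rfl, rfl⟩ | ⟨rfl, rfl⟩ |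
    ⟨rfl, rfl⟩
  · exact ⟨γ ++ s₁ :: s₂ :: s₃ :: ρ, β, by simp, by simpa using hmove γ (ρ ++ a :: b :: β)⟩
  · exact ⟨α, ρ ++ s₁ :: s₂ :: s₃ :: δ, by simp, by simpa using hmove (α ++ a :: b :: ρ) δ⟩
  · simpa using hone (by simpa using hW)
  · simpa using htwo (by simpa using hW)

theorem exists_lift_of_symmGen (hba : b < a) (hW : IsWellNestedWord (α ++ a :: b :: β))
    {z : List ℤ} (hs : SymmGen PrecStep (α ++ β) z) :
    ∃ α' β', z = α' ++ β' ∧ PrecEquiv (α ++ a :: b :: β) (α' ++ a :: b :: β') := by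
  rcases hs with ⟨γ, δ, A, B, C, hAB, hBC, he, rfl⟩ | ⟨γ, δ, A, B, C, hAB, hBC, rfl, he⟩
  · simpa using exists_lift_of_window (fun γ δ => PrecEquiv.fwd γ δ hAB hBC)
      (exists_lift_window_fwd_one hba hAB hBC) (exists_lift_window_fwd_two hba hAB hBC) hW
      (he.trans (by simp))
  · simpa using exists_lift_of_window (fun γ δ => PrecEquiv.bwd γ δ hAB hBC)
      (exists_lift_window_bwd_one hba hAB hBC) (exists_lift_window_bwd_two hba hAB hBC) hW
      (he.trans (by simp))

theorem false_of_desc3_window_one {γ δ : List ℤ} {c₁ c₂ c₃ : ℤ} (hba : b < a)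
    (hW : IsWellNestedWord (γ ++ c₁ :: a :: b :: c₂ :: c₃ :: δ)) (h₁₂ : c₂ < c₁)
    (h₂₃ : c₃ < c₂) : False := by
  obtain ⟨h₁a, -, -, -, -, -, -, hb₂, -, -⟩ := hW.1.window_five_distinct
  replace hb₂ : b < c₂ := hb₂.lt_or_gt.resolve_right
    fun h₂b => hW.false_of_desc3 (γ ++ [c₁, a]) δ (by simp) h₂b h₂₃
  rcases h₁a.lt_or_gt with h₁a | ha₁
  · have m := PrecEquiv.fwd γ (c₂ :: c₃ :: δ) (hb₂.trans h₁₂) h₁a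
    exact (hW.of_precEquiv m).false_of_desc3 (γ ++ [a, b]) δ (by simp) h₁₂ h₂₃
  · exact hW.false_of_desc3 γ (c₂ :: c₃ :: δ) rfl ha₁ hba

theorem false_of_desc3_window_two {γ δ : List ℤ} {c₁ c₂ c₃ : ℤ} (hba : b < a)
    (hW : IsWellNestedWord (γ ++ c₁ :: c₂ :: a :: b :: c₃ :: δ)) (h₁₂ : c₂ < c₁)
    (h₂₃ : c₃ < c₂) : False := by
  obtain ⟨-, -, -, -, h₂a, -, -, -, -, hb₃⟩ := hW.1.window_five_distinct
  replace hb₃ : b < c₃ := hb₃.lt_or_gt.resolve_right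
    (hW.false_of_desc3 (γ ++ [c₁, c₂]) δ (by simp) hba)
  rcases h₂a.lt_or_gt with h₂a | ha₂
  · have m := PrecEquiv.fwd (γ ++ [c₁]) (c₃ :: δ) (hb₃.trans h₂₃) h₂a
    exact false_of_desc3_window_one hba (hW.of_precEquiv (by simpa using m)) h₁₂ h₂₃
  · exact hW.false_of_desc3 (γ ++ [c₁]) (c₃ :: δ) (by simp) ha₂ hba

theorem not_has321_of_delete (hba : b < a) (hW : IsWellNestedWord (α ++ a :: b :: β)) :
    ¬Has321 (α ++ β) := by
  rintro ⟨γ, δ, c₁, c₂, c₃, he, h₁₂, h₂₃⟩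
  rcases List.append_eq_window_cases (by simpa using he) with ⟨ρ, rfl, rfl⟩ | ⟨ρ, rfl, rfl⟩ |
    ⟨rfl, rfl⟩ | ⟨rfl, rfl⟩
  · exact hW.false_of_desc3 γ (ρ ++ a :: b :: β) (by simp) h₁₂ h₂₃
  · exact hW.false_of_desc3 (α ++ a :: b :: ρ) δ (by simp) h₁₂ h₂₃
  · exact false_of_desc3_window_one hba (by simpa using hW) h₁₂ h₂₃
  · exact false_of_desc3_window_two hba (by simpa using hW) h₁₂ h₂₃

theorem IsWellNestedWord.delete_descent (hW : IsWellNestedWord (α ++ a :: b :: β))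
    (hba : b < a) : IsWellNestedWord (α ++ β) := by
  have lift : ∀ z, PrecEquiv (α ++ β) z →
      ∃ α' β', z = α' ++ β' ∧ PrecEquiv (α ++ a :: b :: β) (α' ++ a :: b :: β') := by
    intro z hz
    induction hz with
    | refl => exact ⟨α, β, rfl, .refl⟩
    | tail _ hs ih =>
      obtain ⟨α', β', rfl, hζ⟩ := ih
      obtain ⟨α'', β'', rfl, hζ'⟩ := exists_lift_of_symmGen hba (hW.of_precEquiv hζ) hs
      exact ⟨α'', β'', rfl, hζ.trans hζ'⟩
  refine ⟨hW.1.sublist (by simp), fun z hz => ?_⟩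
  obtain ⟨α', β', rfl, hζ⟩ := lift z hz
  exact not_has321_of_delete hba (hW.of_precEquiv hζ)

end Deletion

theorem IsWellNestedWord.delete_straddling_descent {u v : List ℤ} {a b a₂ b₂ : ℤ}
    (hW : IsWellNestedWord (u ++ a₂ :: a :: b :: b₂ :: v)) (hba : b < a) (hb₂ : b₂ < a₂)
    (ha₂ : a₂ ≤ a) : b < b₂ ∧ IsWellNestedWord (u ++ a :: b :: v) := by
  have hne : b ≠ b₂ := hW.1.ne_of_pair_sublist
    (show [b, b₂] <:+: _ from ⟨u ++ [a₂, a], v, by simp⟩).sublist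
  have hbb₂ : b < b₂ :=
    hne.lt_or_gt.resolve_right (hW.false_of_desc3 (u ++ [a₂]) v (by simp) hba)
  have m : PrecEquiv (u ++ a₂ :: a :: b :: b₂ :: v) (u ++ a₂ :: b₂ :: a :: b :: v) := by
    simpa using PrecEquiv.bwd (u ++ [a₂]) v hbb₂ (hb₂.trans_le ha₂)
  exact ⟨hbb₂, (hW.of_precEquiv m).delete_descent hb₂⟩

theorem IsWellNestedWord.delete_later_descent {u t v : List ℤ} {a b a₂ b₂ : ℤ}
    (hW : IsWellNestedWord (u ++ a :: b :: (t ++ a₂ :: b₂ :: v))) (hba : b < a)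
    (hb₂ : b₂ < a₂) (ht : (t ++ [a₂]).Pairwise (· ≤ ·)) :
    ¬(a₂ < a ∧ b₂ < b) ∧ IsWellNestedWord (u ++ a :: b :: (t ++ v)) := by
  refine ⟨fun ⟨ha₂, hb₂b⟩ => ?_, by
    simpa using IsWellNestedWord.delete_descent (α := u ++ a :: b :: t) (by simpa using hW) hb₂⟩
  have hbt := IsWellNestedWord.lt_of_mem_of_pairwise (L := t ++ [a₂]) (δ := b₂ :: v)
    (by simpa using hW) hba ht
  have hnd : (t ++ [a₂]).Nodup :=
    hW.1.sublist (show t ++ [a₂] <:+: _ from ⟨u ++ [a, b], b₂ :: v, by simp⟩).sublist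
  have hta₂ : ∀ e ∈ t, e < a₂ := fun e he =>
    lt_of_le_of_ne ((List.pairwise_append.mp ht).2.2 e he a₂ (by simp))
      fun h => List.disjoint_of_nodup_append hnd he (by simp [h])
  have m := PrecEquiv.descent_past v (c := a₂) (y := b₂) (u ++ [a]) (b :: t) fun e he => by
    rcases List.mem_cons.mp he with h | he
    · exact h ▸ ⟨hb₂b, hbt a₂ (by simp)⟩
    · exact ⟨hb₂b.trans (hbt e (by simp [he])), hta₂ e he⟩
  exact (hW.of_precEquiv (by simpa using m)).false_of_desc3 u (b :: (t ++ v)) (by simp) ha₂ hb₂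

theorem IsWellNestedWord.exists_delete_next_descent {u v u₂ v₂ : List ℤ} {a b a₂ b₂ : ℤ}
    (hW : IsWellNestedWord (u ++ a :: b :: v)) (hba : b < a) (hu : (u ++ [a]).Pairwise (· ≤ ·))
    (he : u ++ v = u₂ ++ a₂ :: b₂ :: v₂) (hb₂ : b₂ < a₂) (hu₂ : (u₂ ++ [a₂]).Pairwise (· ≤ ·)) :
    ¬(a₂ < a ∧ b₂ < b) ∧ ∃ u' v', u' ++ v' = u₂ ++ v₂ ∧
      IsWellNestedWord (u' ++ a :: b :: v') ∧ (u' ++ [a]).Pairwise (· ≤ ·) := by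
  rcases append_eq_firstDescent_cases (List.pairwise_append.mp hu).1 hb₂ he with
    ⟨rfl, rfl⟩ | ⟨t, rfl, rfl⟩
  · have ha₂ : a₂ ≤ a := (List.pairwise_append.mp hu).2.2 a₂ (by simp) a (by simp)
    obtain ⟨hbb₂, hW'⟩ := IsWellNestedWord.delete_straddling_descent (by simpa using hW) hba hb₂ ha₂
    exact ⟨fun h => (h.2.trans hbb₂).false, u₂, v₂, rfl, hW', hu.sublist (by simp)⟩
  · obtain ⟨hnot, hW'⟩ := hW.delete_later_descent hba hb₂ (by simpa using hu₂.sublist (by simp))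
    exact ⟨hnot, u, t ++ v₂, by simp, hW', hu⟩

theorem not_lt_lt_of_mem_ndes_of_firstDescent {u v : List ℤ} {a b : ℤ}
    (hW : IsWellNestedWord (u ++ a :: b :: v)) (hba : b < a) (hu : (u ++ [a]).Pairwise (· ≤ ·))
    {x y : ℤ} (h : (x, y) ∈ ndes (u ++ v)) : ¬(x < a ∧ y < b) := by
  obtain ⟨u₂, a₂, b₂, v₂, he, hb₂, hu₂, hndes⟩ := exists_firstDescent_of_mem_ndes h
  obtain ⟨hnot, u', v', he', hW', hu'⟩ := hW.exists_delete_next_descent hba hu he hb₂ hu₂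
  rw [hndes, Finset.mem_insert, Prod.mk.injEq, ← he'] at h
  rcases h with ⟨rfl, rfl⟩ | h
  · exact hnot
  · exact not_lt_lt_of_mem_ndes_of_firstDescent hW' hba hu' h
termination_by (u ++ v).length
decreasing_by
  have h₁ := congrArg List.length he
  have h₂ := congrArg List.length he'
  simp only [List.length_append, List.length_cons] at h₁ h₂ ⊢
  omega

theorem IsWellNestedWord.pair_sublist_of_mem_ndes {w : List ℤ} (hW : IsWellNestedWord w)
    {x y x' y' : ℤ} (h : (x, y) ∈ ndes w) (h' : (x', y') ∈ ndes w) (hx : x < x') (hy : y < y') :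
    [y, x'].Sublist w := by
  obtain ⟨u, a, b, v, hw, hba, hu, hndes⟩ := exists_firstDescent_of_mem_ndes h
  rw [hndes, Finset.mem_insert, Prod.mk.injEq] at h h'
  rw [hw] at hW ⊢
  rcases h with ⟨rfl, rfl⟩ | h <;> rcases h' with ⟨rfl, rfl⟩ | h'
  · exact absurd hx (lt_irrefl _)
  · have hx' : x' ∈ u ++ v := (sublist_of_mem_ndes h').1.subset (by simp)
    have hx'v : x' ∈ v := (List.mem_append.mp hx').resolve_left fun hx'u =>
      hx.not_ge ((List.pairwise_append.mp hu).2.2 x' hx'u x (by simp))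
    exact (List.cons_sublist_cons.mpr (List.singleton_sublist.mpr hx'v)).trans (by simp)
  · exact absurd ⟨hx, hy⟩ (not_lt_lt_of_mem_ndes_of_firstDescent hW hba hu h)
  · exact ((hW.delete_descent hba).pair_sublist_of_mem_ndes h h' hx hy).trans (by simp)
termination_by w.length
decreasing_by simp [hw]

/-- Let `w` be a partial permutation in a well-nested family, and
`i, j, k, l` indices with `(w_i, w_j), (w_k, w_l) ∈ NDes(w)`, `w_i < w_k` and
`w_j < w_l`.  Then `i < j < k < l`. -/
theorem stmt12 (E : Set (List ℤ)) (hE : WellNested E) (w : List ℤ) (hw : w ∈ E)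
    (i j k l : ℕ) (hi : i < w.length) (hj : j < w.length) (hk : k < w.length)
    (hl : l < w.length)
    (hij : (w.get ⟨i, hi⟩, w.get ⟨j, hj⟩) ∈ ndes w)
    (hkl : (w.get ⟨k, hk⟩, w.get ⟨l, hl⟩) ∈ ndes w)
    (h1 : w.get ⟨i, hi⟩ < w.get ⟨k, hk⟩) (h2 : w.get ⟨j, hj⟩ < w.get ⟨l, hl⟩) :
    i < j ∧ j < k ∧ k < l := by
  have hW := hE.isWellNestedWord hw
  exact ⟨hW.1.lt_of_pair_sublist hi hj (sublist_of_mem_ndes hij).1,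
    hW.1.lt_of_pair_sublist hj hk (hW.pair_sublist_of_mem_ndes hij hkl h1 h2),
    hW.1.lt_of_pair_sublist hk hl (sublist_of_mem_ndes hkl).1⟩
end

section
/- For a finite set X of m positive integers, the number of noncrossing symmetric perfect matchings on X ⊔ (−X) equals the central binomial coefficient C(m, ⌊m/2⌋). -/
/-- `M` is a noncrossing symmetric perfect matching on `X ⊔ (−X)`: all blocks
have size 2, blocks consist of elements of `X ⊔ (−X)`, every element of
`X ⊔ (−X)` lies in exactly one block, `M` is invariant under negation, and no
two blocks `{a,c}`, `{b,d}` satisfy `a < b < c < d`. -/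
def IsNCSP (X : Finset ℤ) (M : Finset (Finset ℤ)) : Prop :=
  (∀ b ∈ M, b.card = 2) ∧
  (∀ b ∈ M, ∀ x ∈ b, x ∈ X ∨ -x ∈ X) ∧
  (∀ x : ℤ, (x ∈ X ∨ -x ∈ X) → ∃! b : Finset ℤ, b ∈ M ∧ x ∈ b) ∧
  (∀ b ∈ M, b.image (fun x => -x) ∈ M) ∧
  ¬∃ a b c d : ℤ, a < b ∧ b < c ∧ c < d ∧
    ({a, c} : Finset ℤ) ∈ M ∧ ({b, d} : Finset ℤ) ∈ M

/-!
Read `X` in increasing order. In a matching `M ∈ NCSP(X)` the block of a positive `x` is either an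
arc `{z, c} ⊆ X` or `{-x, x}`, since a block `{x, -y}` with `y ≠ x` crosses its mirror image.
Let the closers `c` of arcs be down steps and all other elements of `X` up steps. Every down step
comes after its opener, so the walk never goes below `0`; noncrossing makes the inside of every arc
a union of arcs, so each arc `{z, c}` is an excursion: the walk returns at `c` for the first time
to its height just before `z`. Conversely, for every nonnegative walk, pairing each down step with
the start of the excursion it ends, and every remaining up step `x` with `-x`, gives a matching in
`NCSP(X)`. Hence `NCSP(X)` is in bijection with the sets `C ⊆ X` of down steps of nonnegative
walks. The number `N(m, h)` of nonnegative walks of length `m` from height `h` satisfies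
`N(m + 1, h) = N(m, h + 1) + N(m, h - 1)`, which is solved by a window of `h + 1` consecutive
binomial coefficients; `N(m, 0) = C(m, ⌊m/2⌋)`.
-/

open Finset
open scoped Pointwise

/-- `C(m, j)`, extended by `0` to negative `j` so that Pascal's rule holds for all `j : ℤ`. -/
def intChoose (m : ℕ) (j : ℤ) : ℕ := if 0 ≤ j then m.choose j.toNat else 0

lemma intChoose_natCast (m k : ℕ) : intChoose m k = m.choose k := by
  simp [intChoose]

lemma intChoose_of_neg (m : ℕ) {j : ℤ} (hj : j < 0) : intChoose m j = 0 := by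
  simp [intChoose, not_le.mpr hj]

lemma intChoose_succ (m : ℕ) (j : ℤ) :
    intChoose (m + 1) j = intChoose m j + intChoose m (j - 1) := by
  rcases lt_or_ge j 0 with hj | hj
  · simp [intChoose_of_neg _ hj, intChoose_of_neg _ (show j - 1 < 0 by omega)]
  obtain ⟨k, rfl⟩ := Int.eq_ofNat_of_zero_le hj
  cases k with
  | zero => simp [intChoose]
  | succ k =>
    rw [show ((k + 1 : ℕ) : ℤ) - 1 = k by push_cast; ring, intChoose_natCast, intChoose_natCast,
      intChoose_natCast, Nat.choose_succ_succ', add_comm]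

lemma intChoose_zero (j : ℤ) : intChoose 0 j = if j = 0 then 1 else 0 := by
  rcases lt_or_ge j 0 with hj | hj
  · simp [intChoose_of_neg _ hj, hj.ne]
  obtain ⟨k, rfl⟩ := Int.eq_ofNat_of_zero_le hj
  rw [intChoose_natCast]
  cases k with
  | zero => simp
  | succ k => simp; omega

def binomWindow (m : ℕ) (a : ℤ) (n : ℕ) : ℕ := ∑ i ∈ range n, intChoose m (a + i)

lemma binomWindow_succ (m : ℕ) (a : ℤ) (n : ℕ) :
    binomWindow (m + 1) a n = binomWindow m a n + binomWindow m (a - 1) n := by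
  simp only [binomWindow, ← sum_add_distrib, intChoose_succ, sub_add_eq_add_sub]

lemma binomWindow_length_succ (m : ℕ) (a : ℤ) (n : ℕ) :
    binomWindow m a (n + 1) = binomWindow m a n + intChoose m (a + n) :=
  sum_range_succ _ _

/-- The number of nonnegative `±1`-walks of length `m` started at height `h`: by the reflection
principle, the sum of the `h + 1` consecutive binomial coefficients `C(m, j)` ending at
`j = ⌊(m + h) / 2⌋`. -/
def walkCount (m : ℕ) (h : ℤ) : ℕ := binomWindow m ((m + h) / 2 - h) (h + 1).toNat

lemma walkCount_of_neg (m : ℕ) {h : ℤ} (hh : h < 0) : walkCount m h = 0 := by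
  simp [walkCount, binomWindow, show (h + 1).toNat = 0 by omega]

lemma walkCount_zero (h : ℤ) : walkCount 0 h = if 0 ≤ h then 1 else 0 := by
  split_ifs with hh
  · obtain ⟨n, rfl⟩ := Int.eq_ofNat_of_zero_le hh
    have hterm : ∀ i ∈ range (n + 1),
        intChoose 0 ((0 + n) / 2 - n + i) = if n - n / 2 = i then 1 else 0 := by
      intro i _
      rw [intChoose_zero]
      exact if_congr (by omega) rfl rfl
    simp only [walkCount, binomWindow, Nat.cast_zero, show ((n : ℤ) + 1).toNat = n + 1 by omega]
    rw [sum_congr rfl hterm, sum_ite_eq, if_pos (by simp)]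
  · exact walkCount_of_neg 0 (by omega)

lemma walkCount_succ (m : ℕ) {h : ℤ} (hh : 0 ≤ h) :
    walkCount (m + 1) h = walkCount m (h + 1) + walkCount m (h - 1) := by
  obtain ⟨n, rfl⟩ := Int.eq_ofNat_of_zero_le hh
  set a : ℤ := (m + 1 + n) / 2 - n
  have h₁ : walkCount (m + 1) n = binomWindow (m + 1) a (n + 1) := by
    simp only [walkCount, a, Nat.cast_succ]; congr 1
  have h₂ : walkCount m (n + 1) = binomWindow m (a - 1) (n + 1 + 1) := by
    simp only [walkCount]; congr 1; omega
  have h₃ : walkCount m (n - 1) = binomWindow m a n := by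
    simp only [walkCount]; congr 1 <;> omega
  rw [h₁, h₂, h₃, binomWindow_succ, binomWindow_length_succ m (a - 1) (n + 1),
    binomWindow_length_succ m a n,
    show a - 1 + ((n + 1 : ℕ) : ℤ) = a + n by push_cast; ring]
  ring

lemma walkCount_zero_height (m : ℕ) : walkCount m 0 = m.choose (m / 2) := by
  simp only [walkCount, binomWindow, zero_add, add_zero, sub_zero, Int.toNat_one, range_one,
    sum_singleton, Nat.cast_zero, show ((m : ℤ) / 2) = ((m / 2 : ℕ) : ℤ) by omega,
    intChoose_natCast]

def walkHeight (X C : Finset ℤ) (t : ℤ) : ℤ := ∑ x ∈ X with x ≤ t, if x ∈ C then -1 else 1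

def IsBallot (X C : Finset ℤ) (h : ℤ) : Prop := ∀ t, 0 ≤ h + walkHeight X C t

section walkHeight

variable {X C : Finset ℤ}

lemma walkHeight_eq_zero {t : ℤ} (ht : ∀ x ∈ X, t < x) : walkHeight X C t = 0 :=
  sum_eq_zero fun x hx => absurd (mem_filter.1 hx).2 (not_le.2 (ht x (mem_filter.1 hx).1))

lemma exists_walkHeight_eq_zero (X C : Finset ℤ) (b : ℤ) : ∃ t < b, walkHeight X C t = 0 := by
  obtain ⟨l, hl⟩ := X.bddBelow
  exact ⟨min (l - 1) (b - 1), by omega,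
    walkHeight_eq_zero fun x hx => by have := hl hx; omega⟩

lemma walkHeight_insert {a t : ℤ} (ha : a ∉ X) :
    walkHeight (insert a X) C t =
      walkHeight X C t + if a ≤ t then (if a ∈ C then -1 else 1) else 0 := by
  by_cases hat : a ≤ t <;> simp [walkHeight, filter_insert, hat, ha, add_comm]

lemma walkHeight_insert_right {a t : ℤ} (ha : a ∉ X) :
    walkHeight X (insert a C) t = walkHeight X C t :=
  sum_congr rfl fun x hx => by
    rw [if_congr (show x ∈ insert a C ↔ x ∈ C by
      simp [show x ≠ a from fun h => ha (h ▸ (mem_filter.1 hx).1)]) rfl rfl]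

lemma walkHeight_eq_sub_one_add (t : ℤ) :
    walkHeight X C t =
      walkHeight X C (t - 1) + if t ∈ X then (if t ∈ C then -1 else 1) else 0 := by
  simp only [walkHeight, sum_filter]
  rw [← sum_ite_eq' X t (fun x => if x ∈ C then (-1 : ℤ) else 1), ← sum_add_distrib]
  refine sum_congr rfl fun x _ => ?_
  split_ifs <;> omega

lemma walkHeight_le_sub_one_add (t : ℤ) : walkHeight X C t ≤ walkHeight X C (t - 1) + 1 := by
  rw [walkHeight_eq_sub_one_add t]; split_ifs <;> omega

lemma walkHeight_sub_one_le_add (t : ℤ) : walkHeight X C (t - 1) ≤ walkHeight X C t + 1 := by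
  rw [walkHeight_eq_sub_one_add t]; split_ifs <;> omega

lemma mem_sdiff_of_walkHeight_sub_one_lt {t : ℤ} (h : walkHeight X C (t - 1) < walkHeight X C t) :
    t ∈ X ∧ t ∉ C := by
  rw [walkHeight_eq_sub_one_add t] at h
  split_ifs at h with h₁ h₂ <;> first | omega | exact ⟨h₁, h₂⟩

lemma mem_of_walkHeight_lt_sub_one {t : ℤ} (h : walkHeight X C t < walkHeight X C (t - 1)) :
    t ∈ X ∧ t ∈ C := by
  rw [walkHeight_eq_sub_one_add t] at h
  split_ifs at h with h₁ h₂ <;> first | omega | exact ⟨h₁, h₂⟩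

lemma walkHeight_sub_walkHeight {a t : ℤ} (hat : a ≤ t) :
    walkHeight X C t - walkHeight X C a =
      (#{x ∈ X | a < x ∧ x ≤ t ∧ x ∉ C} : ℤ) - #{x ∈ X | a < x ∧ x ≤ t ∧ x ∈ C} := by
  simp only [walkHeight, sum_filter, card_filter, Nat.cast_sum, ← sum_sub_distrib]
  refine sum_congr rfl fun x _ => ?_
  split_ifs <;> first | omega | simp_all

lemma walkHeight_le_of_injective {a t : ℤ} {f : ℤ → ℤ} (hat : a ≤ t) (hf : Function.Injective f)
    (hmaps : ∀ x ∈ X, x ∈ C → a < x → x ≤ t → f x ∈ X ∧ a < f x ∧ f x ≤ t ∧ f x ∉ C) :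
    walkHeight X C a ≤ walkHeight X C t := by
  rw [← sub_nonneg, walkHeight_sub_walkHeight hat, sub_nonneg, Nat.cast_le]
  refine card_le_card_of_injOn f (fun x hx => ?_) hf.injOn
  simp only [mem_coe, mem_filter] at hx ⊢
  exact hmaps x hx.1 hx.2.2.2 hx.2.1 hx.2.2.1

lemma walkHeight_le_of_injective' {a t : ℤ} {f : ℤ → ℤ} (hat : a ≤ t) (hf : Function.Injective f)
    (hmaps : ∀ x ∈ X, x ∉ C → a < x → x ≤ t → f x ∈ X ∧ a < f x ∧ f x ≤ t ∧ f x ∈ C) :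
    walkHeight X C t ≤ walkHeight X C a := by
  rw [← sub_nonpos, walkHeight_sub_walkHeight hat, sub_nonpos, Nat.cast_le]
  refine card_le_card_of_injOn f (fun x hx => ?_) hf.injOn
  simp only [mem_coe, mem_filter] at hx ⊢
  exact hmaps x hx.1 hx.2.2.2 hx.2.1 hx.2.2.1

end walkHeight

section ballot

variable {s C : Finset ℤ} {a h : ℤ}

lemma isBallot_insert (hs : ∀ x ∈ s, a < x) (haC : a ∉ C) :
    IsBallot (insert a s) C h ↔ 0 ≤ h ∧ IsBallot s C (h + 1) := by
  have ha : a ∉ s := fun h => lt_irrefl a (hs a h)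
  have low : ∀ t ≤ a, walkHeight s C t = 0 := fun t ht =>
    walkHeight_eq_zero fun x hx => ht.trans_lt (hs x hx)
  have step : ∀ t, walkHeight (insert a s) C t = walkHeight s C t + if a ≤ t then 1 else 0 :=
    fun t => by rw [walkHeight_insert ha, if_neg haC]
  refine ⟨fun hb => ⟨?_, fun t => ?_⟩, fun ⟨hh, hb⟩ t => ?_⟩
  · have := hb (a - 1)
    rw [step, low _ (by omega), if_neg (by omega)] at this
    omega
  all_goals
    have := hb t
    rw [step] at *
    rcases lt_or_ge t a with hta | hta
    · rw [low t hta.le] at *; split_ifs at * <;> omega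
    · split_ifs at * <;> omega

lemma isBallot_insert_insert (hs : ∀ x ∈ s, a < x) :
    IsBallot (insert a s) (insert a C) h ↔ IsBallot s C (h - 1) := by
  have ha : a ∉ s := fun h => lt_irrefl a (hs a h)
  have low : ∀ t ≤ a, walkHeight s C t = 0 := fun t ht =>
    walkHeight_eq_zero fun x hx => ht.trans_lt (hs x hx)
  have step : ∀ t, walkHeight (insert a s) (insert a C) t =
      walkHeight s C t - if a ≤ t then 1 else 0 := fun t => by
    rw [walkHeight_insert ha, walkHeight_insert_right ha, if_pos (mem_insert_self a C)]
    split_ifs <;> ring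
  refine ⟨fun hb t => ?_, fun hb t => ?_⟩ <;>
  · have := hb a
    have := hb t
    simp only [step, low a le_rfl, le_refl, if_true] at *
    rcases lt_or_ge t a with hta | hta
    · rw [low t hta.le] at *; split_ifs at * <;> omega
    · split_ifs at * <;> omega

end ballot

open Classical in
theorem card_isBallot (X : Finset ℤ) (h : ℤ) :
    #{C ∈ X.powerset | IsBallot X C h} = walkCount #X h := by
  induction X using Finset.induction_on_min generalizing h with
  | empty =>
    have : IsBallot ∅ ∅ h ↔ 0 ≤ h := by simp [IsBallot, walkHeight]
    rw [powerset_empty, filter_singleton, card_empty, walkCount_zero]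
    split_ifs <;> simp_all
  | insert a s hs ih =>
    have ha : a ∉ s := fun h => lt_irrefl a (hs a h)
    have hfirst : #{C ∈ s.powerset | IsBallot (insert a s) C h} =
        if 0 ≤ h then walkCount #s (h + 1) else 0 := by
      have hC : ∀ C ∈ s.powerset, IsBallot (insert a s) C h ↔ 0 ≤ h ∧ IsBallot s C (h + 1) :=
        fun C hC => isBallot_insert hs fun haC => ha (mem_powerset.1 hC haC)
      split_ifs with hh
      · rw [← ih]
        exact congrArg card (filter_congr fun C hC' => by simp [hC C hC', hh])
      · exact card_eq_zero.2 (filter_eq_empty_iff.2 fun C hC' => by simp [hC C hC', hh])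
    have hsecond :
        #{C ∈ s.powerset | IsBallot (insert a s) (insert a C) h} = walkCount #s (h - 1) := by
      rw [← ih]
      exact congrArg card (filter_congr fun C _ => isBallot_insert_insert hs)
    rw [card_insert_of_notMem ha, card_filter, sum_powerset_insert ha, ← card_filter, ← card_filter,
      hfirst, hsecond]
    rcases lt_or_ge h 0 with hh | hh
    · simp [hh.not_ge, walkCount_of_neg _ hh, walkCount_of_neg _ (show h - 1 < 0 by omega)]
    · rw [if_pos hh, walkCount_succ _ hh]

/-- `y` opens the arc closed by `c`: the walk returns at `c` for the first time to the height it
had just before `y`. -/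
def IsArc (X C : Finset ℤ) (y c : ℤ) : Prop :=
  y < c ∧ walkHeight X C (y - 1) = walkHeight X C c ∧
    ∀ t, y ≤ t → t < c → walkHeight X C c < walkHeight X C t

namespace IsArc

variable {X C : Finset ℤ} {a b c d y : ℤ}

lemma opener_mem (h : IsArc X C y c) : y ∈ X ∧ y ∉ C := by
  obtain ⟨hyc, heq, habove⟩ := h
  exact mem_sdiff_of_walkHeight_sub_one_lt (by have := habove y le_rfl hyc; omega)

lemma closer_mem (h : IsArc X C y c) : c ∈ X ∧ c ∈ C := by
  obtain ⟨hyc, -, habove⟩ := h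
  exact mem_of_walkHeight_lt_sub_one (habove (c - 1) (by omega) (by omega))

lemma left_unique {y' : ℤ} (h : IsArc X C y c) (h' : IsArc X C y' c) : y = y' := by
  by_contra hne
  wlog hlt : y < y' generalizing y y'
  · exact this h' h (Ne.symm hne) (by omega)
  have := h.2.2 (y' - 1) (by omega) (by have := h'.1; omega)
  have := h'.2.1
  omega

lemma right_unique {c' : ℤ} (h : IsArc X C y c) (h' : IsArc X C y c') : c = c' := by
  by_contra hne
  wlog hlt : c < c' generalizing c c'
  · exact this h' h (Ne.symm hne) (by omega)
  have := h'.2.2 c h.1.le hlt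
  have := h.2.1
  have := h'.2.1
  omega

lemma not_cross (hac : IsArc X C a c) (hbd : IsArc X C b d) (hab : a < b) (hbc : b < c)
    (hcd : c < d) : False := by
  have := hac.2.2 (b - 1) (by omega) (by omega)
  have := hbd.2.2 c hbc.le hcd
  have := hbd.2.1
  omega

end IsArc

section existence

variable {X C : Finset ℤ}

/-- In a ballot walk every down step closes an arc: its opener is the step after the last visit,
before `c`, of the height of `c`. -/
lemma exists_isArc_of_mem {c : ℤ} (hb : IsBallot X C 0) (hcX : c ∈ X) (hcC : c ∈ C) :
    ∃ y, IsArc X C y c := by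
  have hdown : walkHeight X C (c - 1) = walkHeight X C c + 1 := by
    rw [walkHeight_eq_sub_one_add c, if_pos hcX, if_pos hcC]; ring
  obtain ⟨t₀, ht₀c, ht₀⟩ := exists_walkHeight_eq_zero X C c
  obtain ⟨s, ⟨hsc, hs⟩, hmax⟩ := Int.exists_greatest_of_bdd
    (P := fun t => t < c ∧ walkHeight X C t ≤ walkHeight X C c)
    ⟨c, fun t ht => ht.1.le⟩ ⟨t₀, ht₀c, by have := hb c; omega⟩
  have habove : ∀ t, s < t → t < c → walkHeight X C c < walkHeight X C t := fun t hst htc =>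
    not_le.1 fun h => absurd (hmax t ⟨htc, h⟩) (not_le.2 hst)
  have hsc' : s + 1 < c := by
    by_contra h
    obtain rfl : s = c - 1 := by omega
    omega
  have := habove (s + 1) (by omega) hsc'
  have := walkHeight_le_sub_one_add (X := X) (C := C) (s + 1)
  refine ⟨s + 1, hsc', ?_, fun t hst htc => habove t (by omega) htc⟩
  rw [add_sub_cancel_right] at *
  omega

/-- The arc opened by `y` closes where the walk first drops back to its height before `y`, which
happens before `c`. -/
lemma exists_isArc_of_lt {a c y : ℤ} (h : IsArc X C a c) (hay : a < y) (hyc : y < c)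
    (hyX : y ∈ X) (hyC : y ∉ C) : ∃ d, IsArc X C y d := by
  have hup : walkHeight X C y = walkHeight X C (y - 1) + 1 := by
    rw [walkHeight_eq_sub_one_add y, if_pos hyX, if_neg hyC]
  obtain ⟨d, ⟨hyd, hd⟩, hmin⟩ := Int.exists_least_of_bdd
    (P := fun t => y ≤ t ∧ walkHeight X C t ≤ walkHeight X C (y - 1))
    ⟨y, fun t ht => ht.1⟩ ⟨c, hyc.le, (h.2.2 (y - 1) (by omega) (by omega)).le⟩
  have hbelow : ∀ t, y ≤ t → t < d → walkHeight X C (y - 1) < walkHeight X C t := fun t hyt htd =>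
    not_le.1 fun h => absurd (hmin t ⟨hyt, h⟩) (not_le.2 htd)
  have hyd' : y < d := lt_of_le_of_ne hyd (by rintro rfl; omega)
  have := hbelow (d - 1) (by omega) (by omega)
  have := walkHeight_sub_one_le_add (X := X) (C := C) d
  exact ⟨d, hyd', by omega, fun t hyt htd => by have := hbelow t hyt htd; omega⟩

end existence

section pairsOf

variable {α : Type*} [DecidableEq α] {S : Finset α} {r : α → α → Prop}

lemma Finset.pair_eq_pair_iff {a b c d : α} :
    ({a, b} : Finset α) = {c, d} ↔ a = c ∧ b = d ∨ a = d ∧ b = c := by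
  rw [← Finset.coe_inj, coe_pair, coe_pair, Set.pair_eq_pair_iff]

open Classical in
noncomputable def pairsOf (S : Finset α) (r : α → α → Prop) : Finset (Finset α) :=
  {p ∈ S ×ˢ S | r p.1 p.2}.image fun p => {p.1, p.2}

lemma mem_pairsOf {b : Finset α} : b ∈ pairsOf S r ↔ ∃ x ∈ S, ∃ y ∈ S, r x y ∧ b = {x, y} := by
  simp [pairsOf, eq_comm, and_assoc]

lemma rel_of_mem_pairsOf (hr : ∀ ⦃x y⦄, r x y → r y x) {a c : α} (h : {a, c} ∈ pairsOf S r) :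
    r a c := by
  obtain ⟨x, -, y, -, hxy, he⟩ := mem_pairsOf.1 h
  rcases Finset.pair_eq_pair_iff.1 he with ⟨rfl, rfl⟩ | ⟨rfl, rfl⟩
  exacts [hxy, hr hxy]

lemma existsUnique_mem_pairsOf (hr : ∀ ⦃x y⦄, r x y → r y x) {x y : α} (hx : x ∈ S) (hy : y ∈ S)
    (hxy : r x y) (hunique : ∀ z, r x z → z = y) : ∃! b, b ∈ pairsOf S r ∧ x ∈ b := by
  refine ⟨{x, y}, ⟨mem_pairsOf.2 ⟨x, hx, y, hy, hxy, rfl⟩, mem_insert_self x _⟩, ?_⟩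
  rintro b ⟨hb, hxb⟩
  obtain ⟨u, -, v, -, huv, rfl⟩ := mem_pairsOf.1 hb
  rcases mem_insert.1 hxb with rfl | hxv
  · rw [hunique v huv]
  · obtain rfl := mem_singleton.1 hxv
    rw [hunique u (hr huv), pair_comm]

end pairsOf

def closers (X : Finset ℤ) (M : Finset (Finset ℤ)) : Finset ℤ :=
  {c ∈ X | ∃ z ∈ X, z < c ∧ {z, c} ∈ M}

def IsUnmatched (X C : Finset ℤ) (x : ℤ) : Prop := x ∈ X ∧ x ∉ C ∧ ∀ d, ¬IsArc X C x d

/-- The blocks of the matching built from a walk: arcs, their mirror images, and `{-x, x}` for the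
unmatched up steps `x`. The last disjunct mentions both `x` and `-x` to make the relation invariant
under negation. -/
def MatchAdj (X C : Finset ℤ) (x y : ℤ) : Prop :=
  IsArc X C x y ∨ IsArc X C y x ∨ IsArc X C (-x) (-y) ∨ IsArc X C (-y) (-x) ∨
    y = -x ∧ (IsUnmatched X C x ∨ IsUnmatched X C (-x))

noncomputable def matchingOf (X C : Finset ℤ) : Finset (Finset ℤ) :=
  pairsOf (X ∪ -X) (MatchAdj X C)

section matchingOf

variable {X C : Finset ℤ} {x y z : ℤ}

lemma matchAdj_symm (h : MatchAdj X C x y) : MatchAdj X C y x := by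
  rcases h with h | h | h | h | ⟨rfl, h⟩
  exacts [.inr (.inl h), .inl h, .inr (.inr (.inr (.inl h))), .inr (.inr (.inl h)),
    .inr (.inr (.inr (.inr ⟨(neg_neg x).symm, by rw [neg_neg]; exact h.symm⟩)))]

lemma matchAdj_neg : MatchAdj X C (-x) (-y) ↔ MatchAdj X C x y := by
  simp only [MatchAdj, neg_neg, neg_eq_iff_eq_neg]
  tauto

lemma mem_or_neg_mem_of_matchAdj (h : MatchAdj X C x y) : y ∈ X ∨ -y ∈ X := by
  rcases h with h | h | h | h | ⟨rfl, h | h⟩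
  exacts [.inl h.closer_mem.1, .inl h.opener_mem.1, .inr h.closer_mem.1, .inr h.opener_mem.1,
    .inr (by rw [neg_neg]; exact h.1), .inl h.1]

lemma exists_matchAdj_of_mem (hb : IsBallot X C 0) (hx : x ∈ X) : ∃ y, MatchAdj X C x y := by
  by_cases hxC : x ∈ C
  · obtain ⟨y, hy⟩ := exists_isArc_of_mem hb hx hxC
    exact ⟨y, .inr (.inl hy)⟩
  by_cases hd : ∃ d, IsArc X C x d
  · obtain ⟨d, hd⟩ := hd
    exact ⟨d, .inl hd⟩
  · exact ⟨-x, .inr (.inr (.inr (.inr ⟨rfl, .inl ⟨hx, hxC, not_exists.1 hd⟩⟩)))⟩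

lemma exists_matchAdj (hb : IsBallot X C 0) (hx : x ∈ X ∨ -x ∈ X) : ∃ y, MatchAdj X C x y := by
  rcases hx with hx | hx
  · exact exists_matchAdj_of_mem hb hx
  · obtain ⟨y, hy⟩ := exists_matchAdj_of_mem hb hx
    exact ⟨-y, by rwa [← matchAdj_neg, neg_neg]⟩

variable (hpos : ∀ x ∈ X, 0 < x)
include hpos

lemma IsArc.pos (h : IsArc X C x y) : 0 < x ∧ 0 < y :=
  ⟨hpos x h.opener_mem.1, hpos y h.closer_mem.1⟩

lemma matchAdj_cases_of_mem (hx : x ∈ X) (h : MatchAdj X C x y) :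
    IsArc X C x y ∨ IsArc X C y x ∨ y = -x ∧ IsUnmatched X C x := by
  have := hpos x hx
  rcases h with h | h | h | h | ⟨rfl, h | h⟩
  · exact .inl h
  · exact .inr (.inl h)
  · have := (h.pos hpos).1; omega
  · have := (h.pos hpos).2; omega
  · exact .inr (.inr ⟨rfl, h⟩)
  · have := hpos _ h.1; omega

lemma matchAdj_cases_of_lt (hxy : x < y) (h : MatchAdj X C x y) :
    IsArc X C x y ∨ IsArc X C (-y) (-x) ∨ x = -y ∧ IsUnmatched X C y := by
  rcases h with h | h | h | h | ⟨rfl, h | h⟩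
  · exact .inl h
  · have := h.1; omega
  · have := h.1; omega
  · exact .inr (.inl h)
  · have := hpos _ h.1; omega
  · exact .inr (.inr ⟨by rw [neg_neg], h⟩)

lemma matchAdj_irrefl : ¬MatchAdj X C x x := by
  rintro (h | h | h | h | ⟨h, h' | h'⟩) <;>
    first | exact lt_irrefl _ h.1 | have := hpos _ h'.1; omega

lemma matchAdj_unique_of_mem (hx : x ∈ X) (hy : MatchAdj X C x y) (hz : MatchAdj X C x z) :
    y = z := by
  rcases matchAdj_cases_of_mem hpos hx hy with h₁ | h₁ | ⟨rfl, h₁⟩ <;>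
    rcases matchAdj_cases_of_mem hpos hx hz with h₂ | h₂ | ⟨rfl, h₂⟩
  · exact h₁.right_unique h₂
  · exact absurd h₂.closer_mem.2 h₁.opener_mem.2
  · exact absurd h₁ (h₂.2.2 y)
  · exact absurd h₁.closer_mem.2 h₂.opener_mem.2
  · exact h₁.left_unique h₂
  · exact absurd h₁.closer_mem.2 h₂.2.1
  · exact absurd h₂ (h₁.2.2 z)
  · exact absurd h₂.closer_mem.2 h₁.2.1
  · rfl

lemma matchAdj_unique (hx : x ∈ X ∨ -x ∈ X) (hy : MatchAdj X C x y) (hz : MatchAdj X C x z) :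
    y = z := by
  rcases hx with hx | hx
  · exact matchAdj_unique_of_mem hpos hx hy hz
  · exact neg_inj.1 (matchAdj_unique_of_mem hpos hx (matchAdj_neg.2 hy) (matchAdj_neg.2 hz))

theorem isNCSP_matchingOf (hb : IsBallot X C 0) : IsNCSP X (matchingOf X C) := by
  have hS : ∀ {x}, x ∈ X ∪ -X ↔ x ∈ X ∨ -x ∈ X := by simp [mem_neg']
  refine ⟨fun b hb => ?_, fun b hb x hx => ?_, fun x hx => ?_, fun b hb => ?_, ?_⟩
  · obtain ⟨x, -, y, -, hxy, rfl⟩ := mem_pairsOf.1 hb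
    exact card_pair fun h => matchAdj_irrefl hpos (h ▸ hxy)
  · obtain ⟨u, hu, v, hv, -, rfl⟩ := mem_pairsOf.1 hb
    rcases mem_insert.1 hx with rfl | hx
    exacts [hS.1 hu, mem_singleton.1 hx ▸ hS.1 hv]
  · obtain ⟨y, hy⟩ := exists_matchAdj hb hx
    exact existsUnique_mem_pairsOf (fun _ _ => matchAdj_symm) (hS.2 hx)
      (hS.2 (mem_or_neg_mem_of_matchAdj hy)) hy fun z hz => matchAdj_unique hpos hx hz hy
  · obtain ⟨u, hu, v, hv, huv, rfl⟩ := mem_pairsOf.1 hb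
    refine mem_pairsOf.2 ⟨-u, hS.2 ?_, -v, hS.2 ?_, matchAdj_neg.2 huv, by simp⟩
    · rw [neg_neg]; exact (hS.1 hu).symm
    · rw [neg_neg]; exact (hS.1 hv).symm
  · rintro ⟨a, b, c, d, hab, hbc, hcd, hac, hbd⟩
    have hac := rel_of_mem_pairsOf (fun _ _ => matchAdj_symm) hac
    have hbd := rel_of_mem_pairsOf (fun _ _ => matchAdj_symm) hbd
    rcases matchAdj_cases_of_lt hpos (by omega) hac with hac | hac | ⟨rfl, hc⟩ <;>
      rcases matchAdj_cases_of_lt hpos (by omega) hbd with hbd | hbd | ⟨rfl, hd⟩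
    · exact hac.not_cross hbd hab hbc hcd
    · have := (hac.pos hpos).1; have := (hbd.pos hpos).1; omega
    · have := (hac.pos hpos).1; omega
    · have := (hac.pos hpos).1; have := (hbd.pos hpos).1; omega
    · exact hbd.not_cross hac (by omega) (by omega) (by omega)
    · obtain ⟨e, he⟩ := exists_isArc_of_lt hac (by omega) (by omega) hd.1 hd.2.1
      exact hd.2.2 e he
    · obtain ⟨e, he⟩ := exists_isArc_of_lt hbd (by omega) (by omega) hc.1 hc.2.1
      exact hc.2.2 e he
    · have := hpos _ hc.1; have := (hbd.pos hpos).1; omega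
    · omega

theorem closers_matchingOf (hCX : C ⊆ X) (hb : IsBallot X C 0) :
    closers X (matchingOf X C) = C := by
  ext c
  simp only [closers, mem_filter]
  constructor
  · rintro ⟨hc, z, hz, hzc, hzcM⟩
    rcases matchAdj_cases_of_lt hpos hzc
      (rel_of_mem_pairsOf (fun _ _ => matchAdj_symm) hzcM) with h | h | ⟨rfl, -⟩
    · exact h.closer_mem.2
    · have := (h.pos hpos).1; have := hpos z hz; omega
    · have := hpos _ hz; have := hpos _ hc; omega
  · intro hcC
    obtain ⟨y, hy⟩ := exists_isArc_of_mem hb (hCX hcC) hcC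
    refine ⟨hCX hcC, y, hy.opener_mem.1, hy.1, mem_pairsOf.2 ⟨y, ?_, c, ?_, .inl hy, rfl⟩⟩ <;>
      simp [hy.opener_mem.1, hCX hcC]

end matchingOf

open Classical in
/-- The other element of the block of `M` containing `x`, and `x` itself if there is none. -/
noncomputable def partner (M : Finset (Finset ℤ)) (x : ℤ) : ℤ :=
  if h : ∃ y, {x, y} ∈ M then h.choose else x

namespace IsNCSP

variable {X : Finset ℤ} {M : Finset (Finset ℤ)} {x y : ℤ}

lemma ne_of_pair_mem (hM : IsNCSP X M) (h : {x, y} ∈ M) : x ≠ y := by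
  rintro rfl
  simpa using hM.1 _ h

lemma exists_pair_mem (hM : IsNCSP X M) (hx : x ∈ X ∨ -x ∈ X) : ∃ y, {x, y} ∈ M := by
  obtain ⟨b, ⟨hb, hxb⟩, -⟩ := hM.2.2.1 x hx
  obtain ⟨u, v, -, rfl⟩ := card_eq_two.1 (hM.1 b hb)
  rcases mem_insert.1 hxb with rfl | h
  · exact ⟨v, hb⟩
  · obtain rfl := mem_singleton.1 h
    exact ⟨u, pair_comm u x ▸ hb⟩

lemma partner_eq (hM : IsNCSP X M) (h : {x, y} ∈ M) : partner M x = y := by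
  have hex : ∃ y, {x, y} ∈ M := ⟨y, h⟩
  rw [partner, dif_pos hex]
  obtain ⟨b, -, hb⟩ := hM.2.2.1 x (hM.2.1 _ h x (mem_insert_self _ _))
  have := (hb _ ⟨hex.choose_spec, mem_insert_self _ _⟩).trans (hb _ ⟨h, mem_insert_self _ _⟩).symm
  rcases Finset.pair_eq_pair_iff.1 this with ⟨-, h'⟩ | ⟨rfl, -⟩
  exacts [h', absurd rfl (hM.ne_of_pair_mem h)]

lemma pair_partner_mem (hM : IsNCSP X M) (hx : x ∈ X ∨ -x ∈ X) : {x, partner M x} ∈ M := by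
  obtain ⟨y, hy⟩ := hM.exists_pair_mem hx
  rwa [hM.partner_eq hy]

lemma partner_partner (hM : IsNCSP X M) (x : ℤ) : partner M (partner M x) = x := by
  by_cases hex : ∃ y, {x, y} ∈ M
  · obtain ⟨y, hy⟩ := hex
    rw [hM.partner_eq hy, hM.partner_eq (pair_comm x y ▸ hy)]
  · have hx : partner M x = x := by rw [partner, dif_neg hex]
    rw [hx, hx]

lemma partner_injective (hM : IsNCSP X M) : Function.Injective (partner M) :=
  Function.LeftInverse.injective hM.partner_partner

lemma partner_neg (hM : IsNCSP X M) (hx : x ∈ X ∨ -x ∈ X) : partner M (-x) = -partner M x := by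
  have := hM.2.2.2.1 _ (hM.pair_partner_mem hx)
  rw [image_insert, image_singleton] at this
  exact hM.partner_eq this

lemma mem_closers_iff (hM : IsNCSP X M) (hx : x ∈ X) :
    x ∈ closers X M ↔ partner M x ∈ X ∧ partner M x < x := by
  refine ⟨fun h => ?_, fun ⟨h₁, h₂⟩ => ?_⟩
  · obtain ⟨-, z, hz, hzx, hzxM⟩ := mem_filter.1 h
    rw [hM.partner_eq (pair_comm z x ▸ hzxM)]
    exact ⟨hz, hzx⟩
  · exact mem_filter.2 ⟨hx, _, h₁, h₂, pair_comm x _ ▸ hM.pair_partner_mem (.inl hx)⟩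

lemma eq_of_subset (hM : IsNCSP X M) {M' : Finset (Finset ℤ)} (hM' : IsNCSP X M') (h : M ⊆ M') :
    M = M' := by
  refine (subset_antisymm h fun b hb => ?_)
  obtain ⟨x, hxb⟩ := card_pos.1 (by rw [hM'.1 b hb]; norm_num)
  have hx := hM'.2.1 b hb x hxb
  obtain ⟨b₀, ⟨hb₀, hxb₀⟩, -⟩ := hM.2.2.1 x hx
  obtain ⟨_, -, huniq⟩ := hM'.2.2.1 x hx
  rwa [(huniq b ⟨hb, hxb⟩).trans (huniq b₀ ⟨h hb₀, hxb₀⟩).symm]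

variable (hpos : ∀ x ∈ X, 0 < x)
include hpos

/-- A block `{x, -y}` with `y ≠ x` would cross its mirror image `{-x, y}`. -/
lemma partner_mem_or_eq_neg (hM : IsNCSP X M) (hx : x ∈ X) :
    partner M x ∈ X ∨ partner M x = -x := by
  set y := partner M x
  have hxy : {x, y} ∈ M := hM.pair_partner_mem (.inl hx)
  have hmirror : {-x, -y} ∈ M := by
    simpa [image_insert] using hM.2.2.2.1 _ hxy
  refine (hM.2.1 _ hxy y (by simp)).imp_right fun hy => ?_
  have := hpos x hx
  have := hpos _ hy
  by_contra hne
  rcases lt_or_gt_of_ne hne with h | h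
  · exact hM.2.2.2.2 ⟨y, -x, x, -y, h, by omega, by omega, pair_comm x y ▸ hxy, hmirror⟩
  · exact hM.2.2.2.2 ⟨-x, y, -y, x, h, by omega, by omega, hmirror, pair_comm x y ▸ hxy⟩

lemma partner_mem_Ioo (hM : IsNCSP X M) {z c t : ℤ} (hz : z ∈ X) (hp : partner M z = c)
    (ht : t ∈ X) (hzt : z < t) (htc : t < c) :
    partner M t ∈ X ∧ z < partner M t ∧ partner M t < c := by
  have hzcM : {z, c} ∈ M := hp ▸ hM.pair_partner_mem (.inl hz)
  have htM : {t, partner M t} ∈ M := hM.pair_partner_mem (.inl ht)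
  have := hpos t ht
  rcases partner_mem_or_eq_neg hpos hM ht with hpt | hpt
  · refine ⟨hpt, ?_, ?_⟩
    · by_contra h
      rcases (not_lt.1 h).lt_or_eq with h | h
      · exact hM.2.2.2.2 ⟨_, z, t, c, h, hzt, htc, pair_comm t _ ▸ htM, hzcM⟩
      · have := hM.partner_partner t
        rw [h, hp] at this
        omega
    · by_contra h
      rcases (not_lt.1 h).lt_or_eq with h | h
      · exact hM.2.2.2.2 ⟨z, t, c, _, hzt, htc, h, hzcM, htM⟩
      · have := hM.partner_partner z
        rw [hp, h, hM.partner_partner] at this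
        omega
  · rw [hpt] at htM
    have := hpos z hz
    exact (hM.2.2.2.2 ⟨-t, z, t, c, by omega, hzt, htc, pair_comm t _ ▸ htM, hzcM⟩).elim

theorem closers_isBallot (hM : IsNCSP X M) : IsBallot X (closers X M) 0 := by
  intro t
  rw [zero_add]
  rcases lt_or_ge t 0 with ht | ht
  · rw [walkHeight_eq_zero fun x hx => ht.trans (hpos x hx)]
  · rw [← walkHeight_eq_zero (t := 0) (C := closers X M) fun x hx => hpos x hx]
    refine walkHeight_le_of_injective ht hM.partner_injective fun x hx hxC _ hxt => ?_
    obtain ⟨hpx, hpxx⟩ := (hM.mem_closers_iff hx).1 hxC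
    rw [hM.mem_closers_iff hpx, hM.partner_partner]
    exact ⟨hpx, hpos _ hpx, by omega, fun h => by omega⟩

theorem isArc_of_partner (hM : IsNCSP X M) {z c : ℤ} (hz : z ∈ X) (hc : c ∈ X) (hzc : z < c)
    (hp : partner M z = c) : IsArc X (closers X M) z c := by
  set C := closers X M
  have hzC : z ∉ C := fun h => by have := ((hM.mem_closers_iff hz).1 h).2; omega
  have hcC : c ∈ C := by
    rw [hM.mem_closers_iff hc, ← hp, hM.partner_partner, hp]
    exact ⟨hz, hzc⟩
  have lower : ∀ t, z ≤ t → t < c → walkHeight X C z ≤ walkHeight X C t :=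
    fun t hzt htc => walkHeight_le_of_injective hzt hM.partner_injective fun x hx hxC hzx hxt => by
      obtain ⟨hpx, hzpx, -⟩ := partner_mem_Ioo hpos hM hz hp hx hzx (by omega)
      have := ((hM.mem_closers_iff hx).1 hxC).2
      rw [hM.mem_closers_iff hpx, hM.partner_partner]
      exact ⟨hpx, hzpx, by omega, fun h => by omega⟩
  have upper : walkHeight X C (c - 1) ≤ walkHeight X C z :=
    walkHeight_le_of_injective' (by omega) hM.partner_injective fun x hx hxC hzx hxc => by
      obtain ⟨hpx, hzpx, hpxc⟩ := partner_mem_Ioo hpos hM hz hp hx hzx (by omega)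
      have hne : partner M x ≠ x := (hM.ne_of_pair_mem (hM.pair_partner_mem (.inl hx))).symm
      have : x < partner M x := lt_of_le_of_ne (not_lt.1 fun h => hxC
        ((hM.mem_closers_iff hx).2 ⟨hpx, h⟩)) hne.symm
      rw [hM.mem_closers_iff hpx, hM.partner_partner]
      exact ⟨hpx, hzpx, by omega, hx, this⟩
  have hup := walkHeight_eq_sub_one_add (X := X) (C := C) z
  have hdown := walkHeight_eq_sub_one_add (X := X) (C := C) c
  rw [if_pos hz, if_neg hzC] at hup
  rw [if_pos hc, if_pos hcC] at hdown
  have := lower (c - 1) (by omega) (by omega)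
  exact ⟨hzc, by omega, fun t hzt htc => by have := lower t hzt htc; omega⟩

theorem matchAdj_partner (hM : IsNCSP X M) (hx : x ∈ X ∨ -x ∈ X) :
    MatchAdj X (closers X M) x (partner M x) := by
  wlog hxX : x ∈ X generalizing x
  · have hx' : -x ∈ X := hx.resolve_left hxX
    rw [← matchAdj_neg, ← hM.partner_neg hx]
    exact this (.inl hx') hx'
  rcases partner_mem_or_eq_neg hpos hM hxX with hpx | hpx
  · have hne : partner M x ≠ x := (hM.ne_of_pair_mem (hM.pair_partner_mem hx)).symm
    rcases lt_or_gt_of_ne hne with h | h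
    · exact .inr (.inl (isArc_of_partner hpos hM hpx hxX h (hM.partner_partner x)))
    · exact .inl (isArc_of_partner hpos hM hxX hpx h rfl)
  · refine .inr (.inr (.inr (.inr ⟨hpx, .inl ⟨hxX, fun hxC => ?_, fun d hd => ?_⟩⟩)))
    · have := ((hM.mem_closers_iff hxX).1 hxC).1
      rw [hpx] at this
      have := hpos _ this
      have := hpos x hxX
      omega
    · obtain ⟨hdX, hdC⟩ := hd.closer_mem
      obtain ⟨hpd, hpdd⟩ := (hM.mem_closers_iff hdX).1 hdC
      have h₁ := (isArc_of_partner hpos hM hpd hdX hpdd (hM.partner_partner d)).left_unique hd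
      have h₂ : partner M x = d := by rw [← h₁, hM.partner_partner]
      have := hpos x hxX
      have := hpos d hdX
      omega

theorem matchingOf_closers (hM : IsNCSP X M) : matchingOf X (closers X M) = M := by
  refine (hM.eq_of_subset (isNCSP_matchingOf hpos (hM.closers_isBallot hpos)) fun b hb => ?_).symm
  obtain ⟨u, v, -, rfl⟩ := card_eq_two.1 (hM.1 b hb)
  have hu := hM.2.1 _ hb u (mem_insert_self _ _)
  have hv := hM.2.1 _ hb v (by simp)
  refine mem_pairsOf.2 ⟨u, by simpa [mem_neg'] using hu, v, by simpa [mem_neg'] using hv, ?_, rfl⟩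
  rw [← hM.partner_eq hb]
  exact matchAdj_partner hpos hM hu

end IsNCSP

/-- For a finite set `X` of `m` positive integers, the number of
noncrossing symmetric perfect matchings on `X ⊔ (−X)` is the central binomial
coefficient `C(m, ⌊m/2⌋)`. -/
theorem stmt14 (X : Finset ℤ) (hpos : ∀ x ∈ X, 0 < x) :
    {M : Finset (Finset ℤ) | IsNCSP X M}.ncard = X.card.choose (X.card / 2) := by
  classical
  have hbij : {M : Finset (Finset ℤ) | IsNCSP X M}.ncard = #{C ∈ X.powerset | IsBallot X C 0} := by
    rw [← Set.ncard_coe_finset]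
    refine Set.ncard_congr (fun M _ => closers X M) (fun M hM => ?_) (fun M M' hM hM' h => ?_)
      fun C hC => ?_
    · simpa using ⟨filter_subset _ _, hM.closers_isBallot hpos⟩
    · rw [← hM.matchingOf_closers hpos, h, hM'.matchingOf_closers hpos]
    · simp only [mem_coe, mem_filter, mem_powerset] at hC
      exact ⟨matchingOf X C, isNCSP_matchingOf hpos hC.2, closers_matchingOf hpos hC.1 hC.2⟩
  rw [hbij, card_isBallot, walkCount_zero_height]
end
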